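/- arXiv:1807.04989 — 5 statements merged into one kernel-verified Lean document; each statement's English description precedes it below -/
import Mathlib

section
/- Let B be a commutative bivariant theory with a nice orientation θ along specialized morphisms, together with a subclass of 'specialized projections' closed under composition and base change, such that whenever g ∘ f = id with g a specialized projection the morphism f is specialized, every Cartesian square base-changing a specialized projection is independent, and independent squares satisfy the right cancellation property. Suppose the structure morphism π : X → pt is a specialized projection. Define the exterior product of α, β ∈ B_*(X) := B(X → pt) by α × β := p^*(α) • β ∈ B_*(X × X), where p : X × X → X is the second projection, and the intersection product on B_*(X) by α₁ ⌢ α₂ := θ(Δ) • (α₁ × α₂), where Δ : X → X × X is the diagonal (which is specialized because both projections X × X → X are specialized projections). Then the map − • θ(π) : (B*(X), •) → (B_*(X), ⌢) from the cohomology ring B*(X) := B(X → X) to homology is an isomorphism of rings. -/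
/-!
The inverse of `φ = − • θ(π)` is `ψ(α) = θ(Δ) • p₂^*(α)`. Both composites collapse to
`θ(Δ) • θ(pᵢ) = θ(Δ ≫ pᵢ) = θ(𝟙) = 1`: for `ψ ∘ φ` because `p₂^*(c • θ(π)) = p₁^*(c) • θ(p₂)`
by niceness and `θ(Δ) • p₁^*(c) = c • θ(Δ)` by commutativity, for `φ ∘ ψ` because
commutativity of the (symmetric) square `X × X` over `pt` and niceness of its transpose turn
`p₂^*(α) • θ(π)` into `θ(p₁) • α`.
Multiplicativity is then formal: by associativity `α₁ ⌢ α₂ = ψ(α₁) • α₂`, hence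
`φ(c • c') = c • φ(c') = ψ(φ(c)) • φ(c') = φ(c) ⌢ φ(c')`.
-/

open CategoryTheory

universe w v u

/-- A bivariant theory in the sense of Fulton--MacPherson, on a category `C` with a final
object `pt` and fibre products, equipped with a class of confined morphisms (containing all
isomorphisms, closed under composition and base change) and a class of independent Cartesian
squares (closed under horizontal and vertical juxtaposition, containing all identity squares).

It assigns to every morphism `f : X ⟶ Y` an abelian group `grp f`, together with a bilinear
associative unital product, pushforwards along confined morphisms, and pullbacks along
independent squares, satisfying the axioms (A12), (A13), (A23) and (A123).

Squares are recorded in the convention of `CategoryTheory.IsPullback`: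
`indep t l f g` is the square with top `t : W ⟶ X`, left `l : W ⟶ Y`, right `f : X ⟶ Z`
and bottom `g : Y ⟶ Z`; it witnesses the pullback of `f` along the base `g`, with pullback
morphism `pull : grp f → grp l`. -/
structure BivariantTheory (C : Type u) [Category.{v} C] where
  /-- the final object -/
  pt : C
  isTerminal : Limits.IsTerminal pt
  /-- the category has fibre products -/
  hasPullbacks : Limits.HasPullbacks C
  /-- confined morphisms -/
  confined : MorphismProperty C
  confined_of_isIso : ∀ {X Y : C} (f : X ⟶ Y), IsIso f → confined f
  confined_comp : ∀ {X Y Z : C} {f : X ⟶ Y} {g : Y ⟶ Z},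
    confined f → confined g → confined (f ≫ g)
  confined_baseChange : ∀ {W X Y Z : C} {t : W ⟶ X} {l : W ⟶ Y} {f : X ⟶ Z} {g : Y ⟶ Z},
    IsPullback t l f g → confined f → confined l
  /-- independent squares -/
  indep : ∀ {W X Y Z : C}, (W ⟶ X) → (W ⟶ Y) → (X ⟶ Z) → (Y ⟶ Z) → Prop
  indep_isPullback : ∀ {W X Y Z : C} {t : W ⟶ X} {l : W ⟶ Y} {f : X ⟶ Z} {g : Y ⟶ Z},
    indep t l f g → IsPullback t l f g
  indep_id_vert : ∀ {X Y : C} (f : X ⟶ Y), indep f (𝟙 X) (𝟙 Y) f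
  indep_id_horiz : ∀ {X Y : C} (f : X ⟶ Y), indep (𝟙 X) f f (𝟙 Y)
  indep_paste₁ : ∀ {W' W X Y' Y Z : C} {t' : W' ⟶ W} {l' : W' ⟶ Y'} {l : W ⟶ Y} {g' : Y' ⟶ Y}
    {t : W ⟶ X} {f : X ⟶ Z} {g : Y ⟶ Z},
    indep t' l' l g' → indep t l f g → indep (t' ≫ t) l' f (g' ≫ g)
  indep_paste₂ : ∀ {W X Y' Y Z' Z : C} {t : W ⟶ X} {f' : W ⟶ Y'} {f : X ⟶ Y} {h₁ : Y' ⟶ Y}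
    {g' : Y' ⟶ Z'} {g : Y ⟶ Z} {h₂ : Z' ⟶ Z},
    indep t f' f h₁ → indep h₁ g' g h₂ → indep t (f' ≫ g') (f ≫ g) h₂
  /-- the bivariant groups -/
  grp : ∀ {X Y : C}, (X ⟶ Y) → AddCommGrpCat.{w}
  /-- the units `1_X ∈ B(X → X)` -/
  one : ∀ X : C, grp (𝟙 X)
  /-- the bivariant product -/
  prod : ∀ {X Y Z : C} {f : X ⟶ Y} {g : Y ⟶ Z} {h : X ⟶ Z},
    f ≫ g = h → grp f → grp g → grp h
  prod_add_left : ∀ {X Y Z : C} {f : X ⟶ Y} {g : Y ⟶ Z} {h : X ⟶ Z} (e : f ≫ g = h)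
    (α α' : grp f) (β : grp g), prod e (α + α') β = prod e α β + prod e α' β
  prod_add_right : ∀ {X Y Z : C} {f : X ⟶ Y} {g : Y ⟶ Z} {h : X ⟶ Z} (e : f ≫ g = h)
    (α : grp f) (β β' : grp g), prod e α (β + β') = prod e α β + prod e α β'
  prod_assoc : ∀ {X Y Z W : C} {f : X ⟶ Y} {g : Y ⟶ Z} {h : Z ⟶ W}
    {fg : X ⟶ Z} {gh : Y ⟶ W} {fgh : X ⟶ W}
    (e₁ : f ≫ g = fg) (e₂ : g ≫ h = gh) (e₃ : fg ≫ h = fgh) (e₄ : f ≫ gh = fgh)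
    (α : grp f) (β : grp g) (γ : grp h),
    prod e₃ (prod e₁ α β) γ = prod e₄ α (prod e₂ β γ)
  one_prod : ∀ {X Y : C} (f : X ⟶ Y) (α : grp f), prod (Category.id_comp f) (one X) α = α
  prod_one : ∀ {X Y : C} (f : X ⟶ Y) (α : grp f), prod (Category.comp_id f) α (one Y) = α
  /-- pushforward along a confined morphism -/
  push : ∀ {X X' Y : C} {f : X ⟶ X'}, confined f →
    ∀ {h' : X' ⟶ Y} {h : X ⟶ Y}, f ≫ h' = h → grp h → grp h'
  push_add : ∀ {X X' Y : C} {f : X ⟶ X'} (hf : confined f) {h' : X' ⟶ Y} {h : X ⟶ Y}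
    (e : f ≫ h' = h) (α α' : grp h), push hf e (α + α') = push hf e α + push hf e α'
  push_id : ∀ {X Y : C} (hid : confined (𝟙 X)) {h : X ⟶ Y} (e : 𝟙 X ≫ h = h) (α : grp h),
    push hid e α = α
  push_comp : ∀ {X X' X'' Y : C} {f : X ⟶ X'} {f' : X' ⟶ X''} {ff' : X ⟶ X''}
    (hf : confined f) (hf' : confined f') (hff' : confined ff') (e₀ : f ≫ f' = ff')
    {h : X ⟶ Y} {h' : X' ⟶ Y} {h'' : X'' ⟶ Y}
    (e₁ : f ≫ h' = h) (e₂ : f' ≫ h'' = h') (e₃ : ff' ≫ h'' = h) (α : grp h),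
    push hff' e₃ α = push hf' e₂ (push hf e₁ α)
  /-- pullback along an independent square -/
  pull : ∀ {W X Y Z : C} {t : W ⟶ X} {l : W ⟶ Y} {f : X ⟶ Z} {g : Y ⟶ Z},
    indep t l f g → grp f → grp l
  pull_add : ∀ {W X Y Z : C} {t : W ⟶ X} {l : W ⟶ Y} {f : X ⟶ Z} {g : Y ⟶ Z}
    (sq : indep t l f g) (α α' : grp f), pull sq (α + α') = pull sq α + pull sq α'
  pull_id : ∀ {X Y : C} {f : X ⟶ Y} (sq : indep (𝟙 X) f f (𝟙 Y)) (α : grp f), pull sq α = α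
  pull_comp : ∀ {W' W X Y' Y Z : C} {t' : W' ⟶ W} {l' : W' ⟶ Y'} {l : W ⟶ Y} {g' : Y' ⟶ Y}
    {t : W ⟶ X} {f : X ⟶ Z} {g : Y ⟶ Z}
    (sq₁ : indep t' l' l g') (sq₂ : indep t l f g) (sq₃ : indep (t' ≫ t) l' f (g' ≫ g))
    (α : grp f), pull sq₃ α = pull sq₁ (pull sq₂ α)
  /-- (A12): pushforward commutes with the bivariant product -/
  A12 : ∀ {X X' Y Z : C} {f : X ⟶ X'} (hf : confined f) {h : X ⟶ Y} {h' : X' ⟶ Y}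
    (e : f ≫ h' = h) {g : Y ⟶ Z} {hg : X ⟶ Z} {h'g : X' ⟶ Z}
    (e₂ : h ≫ g = hg) (e₃ : h' ≫ g = h'g) (e₄ : f ≫ h'g = hg)
    (α : grp h) (β : grp g),
    push hf e₄ (prod e₂ α β) = prod e₃ (push hf e α) β
  /-- (A13): pullback commutes with the bivariant product -/
  A13 : ∀ {X' X Y' Y Z' Z : C} {tX : X' ⟶ X} {f' : X' ⟶ Y'} {f : X ⟶ Y} {hY : Y' ⟶ Y}
    {g' : Y' ⟶ Z'} {g : Y ⟶ Z} {hZ : Z' ⟶ Z} {fg : X ⟶ Z} {f'g' : X' ⟶ Z'}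
    (sqU : indep tX f' f hY) (sqL : indep hY g' g hZ) (sqO : indep tX f'g' fg hZ)
    (e₁ : f ≫ g = fg) (e₂ : f' ≫ g' = f'g') (α : grp f) (β : grp g),
    pull sqO (prod e₁ α β) = prod e₂ (pull sqU α) (pull sqL β)
  /-- (A23): pullback commutes with pushforward -/
  A23 : ∀ {X' X Y' Y Z' Z : C} {f : X ⟶ Y} {f' : X' ⟶ Y'} {tX : X' ⟶ X} {tY : Y' ⟶ Y}
    {p : X ⟶ Z} {q : Y ⟶ Z} {p' : X' ⟶ Z'} {q' : Y' ⟶ Z'} {hZ : Z' ⟶ Z}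
    (hf : confined f) (hf' : confined f') (e : f ≫ q = p) (e' : f' ≫ q' = p')
    (sqBig : indep tX p' p hZ) (sqLow : indep tY q' q hZ) (ecomm : tX ≫ f = f' ≫ tY)
    (α : grp p),
    pull sqLow (push hf e α) = push hf' e' (pull sqBig α)
  /-- (A123): the push-pull (projection) formula -/
  A123 : ∀ {X' X Y' Y Z : C} {g' : X' ⟶ X} {f' : X' ⟶ Y'} {f : X ⟶ Y} {g : Y' ⟶ Y}
    {q : Y ⟶ Z} {r : Y' ⟶ Z} {rf' : X' ⟶ Z} {s : X ⟶ Z}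
    (sq : indep g' f' f g) (hg : confined g) (hg' : confined g')
    (e : g ≫ q = r) (e' : f' ≫ r = rf') (e'' : g' ≫ s = rf') (e₃ : f ≫ q = s)
    (α : grp f) (β : grp r),
    push hg' e'' (prod e' (pull sq α) β) = prod e₃ α (push hg e β)

namespace BivariantTheory

variable {C : Type u} [Category.{v} C]

/-- A bivariant theory is commutative if, for every independent square whose transpose is
also independent, `g^*(α) • β = f^*(β) • α`. -/
def Commutative (B : BivariantTheory.{w} C) : Prop :=
  ∀ {W X Y Z : C} {t : W ⟶ X} {l : W ⟶ Y} {f : X ⟶ Z} {g : Y ⟶ Z} {d : W ⟶ Z}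
    (sq : B.indep t l f g) (sqT : B.indep l t g f)
    (e₁ : l ≫ g = d) (e₂ : t ≫ f = d) (α : B.grp f) (β : B.grp g),
    B.prod e₁ (B.pull sq α) β = B.prod e₂ (B.pull sqT β) α

end BivariantTheory

/-- An orientation on a bivariant theory: a multiplicative family of elements
`θ(f) ∈ B(X → Y)` for `f` in a class of specialized morphisms which contains all
isomorphisms and is closed under composition. -/
structure BivariantTheory.Orientation {C : Type u} [Category.{v} C] (B : BivariantTheory.{w} C) where
  /-- specialized morphisms -/
  specialized : MorphismProperty C
  specialized_of_isIso : ∀ {X Y : C} (f : X ⟶ Y), IsIso f → specialized f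
  specialized_comp : ∀ {X Y Z : C} {f : X ⟶ Y} {g : Y ⟶ Z},
    specialized f → specialized g → specialized (f ≫ g)
  /-- the orientation classes -/
  θ : ∀ {X Y : C} {f : X ⟶ Y}, specialized f → B.grp f
  θ_id : ∀ {X : C} (h : specialized (𝟙 X)), θ h = B.one X
  θ_comp : ∀ {X Y Z : C} {f : X ⟶ Y} {g : Y ⟶ Z} {h : X ⟶ Z}
    (hf : specialized f) (hg : specialized g) (hh : specialized h) (e : f ≫ g = h),
    B.prod e (θ hf) (θ hg) = θ hh

/-- An orientation is nice (stable under pullbacks) if specialized morphisms are stable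
under base change in independent squares and `g^*(θ(f)) = θ(f')`. -/
structure BivariantTheory.Orientation.IsNice {C : Type u} [Category.{v} C]
    {B : BivariantTheory.{w} C} (o : B.Orientation) : Prop where
  specialized_baseChange : ∀ {W X Y Z : C} {t : W ⟶ X} {l : W ⟶ Y} {f : X ⟶ Z} {g : Y ⟶ Z},
    B.indep t l f g → o.specialized f → o.specialized l
  pull_θ : ∀ {W X Y Z : C} {t : W ⟶ X} {l : W ⟶ Y} {f : X ⟶ Z} {g : Y ⟶ Z}
    (sq : B.indep t l f g) (hf : o.specialized f) (hl : o.specialized l),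
    B.pull sq (o.θ hf) = o.θ hl

namespace BivariantTheory

variable {C : Type u} [Category.{v} C] (B : BivariantTheory.{w} C)

theorem pull_eq_self_of_eq_id {X Y : C} {f : X ⟶ Y} {t : X ⟶ X} {g : Y ⟶ Y}
    (ht : t = 𝟙 X) (hg : g = 𝟙 Y) (sq : B.indep t f f g) (α : B.grp f) : B.pull sq α = α := by
  subst ht hg
  exact B.pull_id sq α

theorem pull_id_vert_pull_id_vert_of_comp_eq_id {X Y : C} {s : X ⟶ Y} {q : Y ⟶ X}
    (h : s ≫ q = 𝟙 X) (c : B.grp (𝟙 X)) :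
    B.pull (B.indep_id_vert s) (B.pull (B.indep_id_vert q) c) = c := by
  rw [← B.pull_comp (B.indep_id_vert s) (B.indep_id_vert q)
    (B.indep_paste₁ (B.indep_id_vert s) (B.indep_id_vert q))]
  exact B.pull_eq_self_of_eq_id h h _ c

variable {B}

theorem Commutative.prod_cohomology_comm (hcomm : B.Commutative) {X Y : C} {f : X ⟶ Y}
    (α : B.grp f) (c : B.grp (𝟙 Y)) :
    B.prod (Category.comp_id f) α c =
      B.prod (Category.id_comp f) (B.pull (B.indep_id_vert f) c) α := by
  have h := hcomm (B.indep_id_vert f) (B.indep_id_horiz f)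
    (Category.id_comp f) (Category.comp_id f) c α
  rw [B.pull_id (B.indep_id_horiz f)] at h
  exact h.symm

theorem Commutative.prod_pull_of_comp_eq_id (hcomm : B.Commutative) {X Y : C}
    {s : X ⟶ Y} {q : Y ⟶ X} (h : s ≫ q = 𝟙 X) (α : B.grp s) (c : B.grp (𝟙 X)) :
    B.prod (Category.comp_id s) α (B.pull (B.indep_id_vert q) c) =
      B.prod (Category.id_comp s) c α := by
  rw [hcomm.prod_cohomology_comm, B.pull_id_vert_pull_id_vert_of_comp_eq_id h]

theorem Orientation.θ_prod_θ_of_comp_eq_id (o : B.Orientation) {X Y : C}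
    {f : X ⟶ Y} {g : Y ⟶ X} (hf : o.specialized f) (hg : o.specialized g) (e : f ≫ g = 𝟙 X) :
    B.prod e (o.θ hf) (o.θ hg) = B.one X := by
  rw [o.θ_comp hf hg (o.specialized_of_isIso _ inferInstance) e, o.θ_id]

theorem Orientation.IsNice.pull_prod_θ {o : B.Orientation} (hnice : o.IsNice) {W X Y Z : C}
    {t : W ⟶ X} {l : W ⟶ Y} {f : X ⟶ Z} {g : Y ⟶ Z} (sq : B.indep t l f g)
    (hf : o.specialized f) (hl : o.specialized l) (c : B.grp (𝟙 X)) :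
    B.pull sq (B.prod (Category.id_comp f) c (o.θ hf)) =
      B.prod (Category.id_comp l) (B.pull (B.indep_id_vert t) c) (o.θ hl) := by
  rw [B.A13 (B.indep_id_vert t) sq sq (Category.id_comp f) (Category.id_comp l) c (o.θ hf),
    hnice.pull_θ sq hf hl]

theorem Commutative.prod_pull_θ_eq_θ_prod (hcomm : B.Commutative) {o : B.Orientation}
    (hnice : o.IsNice) {W X Y Z : C} {t : W ⟶ X} {l : W ⟶ Y} {f : X ⟶ Z} {g : Y ⟶ Z}
    {d : W ⟶ Z} (sq : B.indep t l f g) (sqT : B.indep l t g f) (e₁ : l ≫ g = d)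
    (e₂ : t ≫ f = d) (hg : o.specialized g) (ht : o.specialized t) (α : B.grp f) :
    B.prod e₁ (B.pull sq α) (o.θ hg) = B.prod e₂ (o.θ ht) α := by
  rw [hcomm sq sqT e₁ e₂, hnice.pull_θ sqT hg ht]

section PoincareDuality

variable {o : B.Orientation} {X XX S : C} {π : X ⟶ S} {p₁ p₂ : XX ⟶ X} {Δ : X ⟶ XX}

theorem θ_prod_pull_prod_θ (hcomm : B.Commutative) (hnice : o.IsNice)
    (sq : B.indep p₁ p₂ π π) (hπ : o.specialized π) (hp₂ : o.specialized p₂)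
    (hΔ : o.specialized Δ) (hΔ₁ : Δ ≫ p₁ = 𝟙 X) (hΔ₂ : Δ ≫ p₂ = 𝟙 X) (c : B.grp (𝟙 X)) :
    B.prod hΔ₂ (o.θ hΔ) (B.pull sq (B.prod (Category.id_comp π) c (o.θ hπ))) = c := by
  rw [hnice.pull_prod_θ sq hπ hp₂,
    ← B.prod_assoc (Category.comp_id Δ) (Category.id_comp p₂) hΔ₂ hΔ₂,
    hcomm.prod_pull_of_comp_eq_id hΔ₁,
    B.prod_assoc (Category.id_comp Δ) hΔ₂ hΔ₂ (Category.id_comp (𝟙 X)),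
    o.θ_prod_θ_of_comp_eq_id, B.prod_one]

theorem prod_θ_θ_prod_pull (hcomm : B.Commutative) (hnice : o.IsNice) {ρ : XX ⟶ S}
    (sq : B.indep p₁ p₂ π π) (sqT : B.indep p₂ p₁ π π) (hρ₁ : p₁ ≫ π = ρ) (hρ₂ : p₂ ≫ π = ρ)
    (hπ : o.specialized π) (hp₁ : o.specialized p₁) (hΔ : o.specialized Δ)
    (hΔ₁ : Δ ≫ p₁ = 𝟙 X) (hΔ₂ : Δ ≫ p₂ = 𝟙 X) (α : B.grp π) :
    B.prod (Category.id_comp π) (B.prod hΔ₂ (o.θ hΔ) (B.pull sq α)) (o.θ hπ) = α := by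
  have hΔρ : Δ ≫ ρ = π := by rw [← hρ₂, ← Category.assoc, hΔ₂, Category.id_comp]
  rw [B.prod_assoc hΔ₂ hρ₂ (Category.id_comp π) hΔρ,
    hcomm.prod_pull_θ_eq_θ_prod hnice sq sqT hρ₂ hρ₁ hπ hp₁,
    ← B.prod_assoc hΔ₁ hρ₁ (Category.id_comp π) hΔρ,
    o.θ_prod_θ_of_comp_eq_id, B.one_prod]

end PoincareDuality

end BivariantTheory

theorem poincare_duality_general
    {C : Type u} [Category.{v} C] (B : BivariantTheory.{w} C)
    (hcomm : B.Commutative) (o : B.Orientation) (hnice : o.IsNice)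
    (proj : MorphismProperty C)
    (hsub : ∀ {X Y : C} {f : X ⟶ Y}, proj f → o.specialized f)
    (hprojBC : ∀ {W X Y Z : C} {t : W ⟶ X} {l : W ⟶ Y} {f : X ⟶ Z} {g : Y ⟶ Z},
      IsPullback t l f g → proj f → proj l)
    (hsec : ∀ {X Y : C} (f : X ⟶ Y) (g : Y ⟶ X), f ≫ g = 𝟙 X → proj g → o.specialized f)
    (hindep : ∀ {W X Y Z : C} {t : W ⟶ X} {l : W ⟶ Y} {f : X ⟶ Z} {g : Y ⟶ Z},
      IsPullback t l f g → proj f → B.indep t l f g)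
    (X : C) (hπ : proj (B.isTerminal.from X))
    (XX : C) (p₁ p₂ : XX ⟶ X)
    (sqX : IsPullback p₁ p₂ (B.isTerminal.from X) (B.isTerminal.from X))
    (Δ : X ⟶ XX) (hΔ₁ : Δ ≫ p₁ = 𝟙 X) (hΔ₂ : Δ ≫ p₂ = 𝟙 X) :
    -- the structure morphism of `X`
    let π := B.isTerminal.from X
    -- the Poincaré duality map `− • θ(π) : B*(X) → B_*(X)`
    let φ : B.grp (𝟙 X) → B.grp π := fun c => B.prod (Category.id_comp π) c (o.θ (hsub hπ))
    -- the exterior product `α × β := p₂^*(α) • β ∈ B_*(X × X)`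
    let ext : B.grp π → B.grp π → B.grp (B.isTerminal.from XX) := fun α β =>
      B.prod (B.isTerminal.hom_ext _ _) (B.pull (hindep sqX hπ) α) β
    -- the intersection product `α₁ ⌢ α₂ := θ(Δ) • (α₁ × α₂)`
    let cap : B.grp π → B.grp π → B.grp π := fun α₁ α₂ =>
      B.prod (B.isTerminal.hom_ext _ _) (o.θ (hsec Δ p₂ hΔ₂ (hprojBC sqX hπ))) (ext α₁ α₂)
    Function.Bijective φ ∧
      ∀ c c' : B.grp (𝟙 X), φ (B.prod (Category.id_comp (𝟙 X)) c c') = cap (φ c) (φ c') := by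
  intro π φ ext cap
  have sq : B.indep p₁ p₂ π π := hindep sqX hπ
  have sqT : B.indep p₂ p₁ π π := hindep sqX.flip hπ
  have hΔ : o.specialized Δ := hsec Δ p₂ hΔ₂ (hprojBC sqX hπ)
  let ψ : B.grp π → B.grp (𝟙 X) := fun α => B.prod hΔ₂ (o.θ hΔ) (B.pull sq α)
  have hψφ : ∀ c, ψ (φ c) = c :=
    B.θ_prod_pull_prod_θ hcomm hnice sq (hsub hπ) (hsub (hprojBC sqX hπ)) hΔ hΔ₁ hΔ₂
  have hφψ : ∀ α, φ (ψ α) = α :=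
    B.prod_θ_θ_prod_pull hcomm hnice (ρ := B.isTerminal.from XX) sq sqT
      (B.isTerminal.hom_ext _ _) (B.isTerminal.hom_ext _ _) (hsub hπ)
      (hsub (hprojBC sqX.flip hπ)) hΔ hΔ₁ hΔ₂
  refine ⟨Function.bijective_iff_has_inverse.mpr ⟨ψ, hψφ, hφψ⟩, fun c c' => ?_⟩
  calc φ (B.prod (Category.id_comp (𝟙 X)) c c')
      = B.prod (Category.id_comp π) c (φ c') := B.prod_assoc _ _ _ _ c c' _
    _ = B.prod (Category.id_comp π) (ψ (φ c)) (φ c') := by rw [hψφ]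
    _ = cap (φ c) (φ c') := B.prod_assoc hΔ₂ _ _ _ _ _ (φ c')

/-- **Proposition (Poincaré duality).** Let `B` be a commutative bivariant theory with a nice
orientation, equipped with a class of specialized projections as in the strong-orientation
proposition. Suppose the structure morphism `π : X ⟶ pt` is a specialized projection. Let
`X × X` be the product (the fibre product over `pt`), with projections `p₁, p₂` and diagonal
`Δ`. Define the exterior product `α × β := p₂^*(α) • β` and the intersection product
`α₁ ⌢ α₂ := θ(Δ) • (α₁ × α₂)`, where `Δ` is specialized since `Δ ≫ p₂ = 𝟙` and `p₂` is a
specialized projection. Then `− • θ(π) : (B*(X), •) → (B_*(X), ⌢)` is a ring isomorphism: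
it is bijective and sends the bivariant product to the intersection product. -/
theorem poincare_duality
    {C : Type u} [Category.{v} C] (B : BivariantTheory.{w} C)
    (hcomm : B.Commutative) (o : B.Orientation) (hnice : o.IsNice)
    (proj : MorphismProperty C)
    (hsub : ∀ {X Y : C} {f : X ⟶ Y}, proj f → o.specialized f)
    (hprojComp : ∀ {X Y Z : C} {f : X ⟶ Y} {g : Y ⟶ Z}, proj f → proj g → proj (f ≫ g))
    (hprojBC : ∀ {W X Y Z : C} {t : W ⟶ X} {l : W ⟶ Y} {f : X ⟶ Z} {g : Y ⟶ Z},
      IsPullback t l f g → proj f → proj l)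
    (hsec : ∀ {X Y : C} (f : X ⟶ Y) (g : Y ⟶ X), f ≫ g = 𝟙 X → proj g → o.specialized f)
    (hindep : ∀ {W X Y Z : C} {t : W ⟶ X} {l : W ⟶ Y} {f : X ⟶ Z} {g : Y ⟶ Z},
      IsPullback t l f g → proj f → B.indep t l f g)
    (hcancel₁ : ∀ {W' W X Y' Y Z : C} {t' : W' ⟶ W} {l' : W' ⟶ Y'} {l : W ⟶ Y} {g' : Y' ⟶ Y}
      {t : W ⟶ X} {f : X ⟶ Z} {g : Y ⟶ Z},
      IsPullback t' l' l g' → B.indep t l f g → B.indep (t' ≫ t) l' f (g' ≫ g) →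
      B.indep t' l' l g')
    (hcancel₂ : ∀ {W X Y' Y Z' Z : C} {t : W ⟶ X} {f' : W ⟶ Y'} {f : X ⟶ Y} {h₁ : Y' ⟶ Y}
      {g' : Y' ⟶ Z'} {g : Y ⟶ Z} {h₂ : Z' ⟶ Z},
      IsPullback t f' f h₁ → B.indep h₁ g' g h₂ → B.indep t (f' ≫ g') (f ≫ g) h₂ →
      B.indep t f' f h₁)
    (X : C) (hπ : proj (B.isTerminal.from X))
    (XX : C) (p₁ p₂ : XX ⟶ X)
    (sqX : IsPullback p₁ p₂ (B.isTerminal.from X) (B.isTerminal.from X))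
    (Δ : X ⟶ XX) (hΔ₁ : Δ ≫ p₁ = 𝟙 X) (hΔ₂ : Δ ≫ p₂ = 𝟙 X) :
    -- the structure morphism of `X`
    let π := B.isTerminal.from X
    -- the Poincaré duality map `− • θ(π) : B*(X) → B_*(X)`
    let φ : B.grp (𝟙 X) → B.grp π := fun c => B.prod (Category.id_comp π) c (o.θ (hsub hπ))
    -- the exterior product `α × β := p₂^*(α) • β ∈ B_*(X × X)`
    let ext : B.grp π → B.grp π → B.grp (B.isTerminal.from XX) := fun α β =>
      B.prod (B.isTerminal.hom_ext _ _) (B.pull (hindep sqX hπ) α) β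
    -- the intersection product `α₁ ⌢ α₂ := θ(Δ) • (α₁ × α₂)`
    let cap : B.grp π → B.grp π → B.grp π := fun α₁ α₂ =>
      B.prod (B.isTerminal.hom_ext _ _) (o.θ (hsec Δ p₂ hΔ₂ (hprojBC sqX hπ))) (ext α₁ α₂)
    Function.Bijective φ ∧
      ∀ c c' : B.grp (𝟙 X), φ (B.prod (Category.id_comp (𝟙 X)) c c') = cap (φ c) (φ c') :=
  poincare_duality_general B hcomm o hnice proj hsub hprojBC hsec hindep X hπ XX p₁ p₂ sqX Δ hΔ₁ hΔ₂
end

section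
/- Let B be a bivariant theory in which every Cartesian square is independent, and let S be a bivariant subset of B concentrated over the final object, i.e. S(X → Y) is empty unless Y = pt. Then the bivariant ideal ⟨S⟩ generated by S admits the following description: ⟨S⟩(X → Y) consists exactly of the finite ℤ-linear combinations of elements of the form g_*(α • f^*(r) • β), where r ∈ S(W → pt) for some W, f : Z → pt is an arbitrary morphism (so that f^*(r) ∈ B(W × Z → Z)), α ∈ B(A → W × Z) and β ∈ B(Z → Y) are arbitrary bivariant elements, and g : A → X is a confined morphism such that the composite A → Z → Y coincides with the composite A → X → Y (i.e. such that the whole expression makes sense). -/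
open CategoryTheory

universe w v u

/-- A bivariant ideal of a bivariant theory `B`: a family of subgroups
`I(X → Y) ⊆ B(X → Y)` closed under bivariant pushforwards and pullbacks, and such that the
bivariant product restricts to maps `B • I ⊆ I` and `I • B ⊆ I`. -/
structure BivariantTheory.Ideal {C : Type u} [Category.{v} C] (B : BivariantTheory.{w} C) where
  car : ∀ {X Y : C} (f : X ⟶ Y), AddSubgroup (B.grp f)
  push_mem : ∀ {X X' Y : C} {f : X ⟶ X'} (hf : B.confined f) {h' : X' ⟶ Y} {h : X ⟶ Y}
    (e : f ≫ h' = h) {α : B.grp h}, α ∈ car h → B.push hf e α ∈ car h'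
  pull_mem : ∀ {W X Y Z : C} {t : W ⟶ X} {l : W ⟶ Y} {f : X ⟶ Z} {g : Y ⟶ Z}
    (sq : B.indep t l f g) {α : B.grp f}, α ∈ car f → B.pull sq α ∈ car l
  prod_mem_left : ∀ {X Y Z : C} {f : X ⟶ Y} {g : Y ⟶ Z} {h : X ⟶ Z} (e : f ≫ g = h)
    {α : B.grp f} (β : B.grp g), α ∈ car f → B.prod e α β ∈ car h
  prod_mem_right : ∀ {X Y Z : C} {f : X ⟶ Y} {g : Y ⟶ Z} {h : X ⟶ Z} (e : f ≫ g = h)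
    (α : B.grp f) {β : B.grp g}, β ∈ car g → B.prod e α β ∈ car h

/-- The bivariant ideal generated by a bivariant subset `S` of `B`: the smallest bivariant
ideal containing `S`, i.e. the intersection of all bivariant ideals containing `S`. -/
def BivariantTheory.genIdeal {C : Type u} [Category.{v} C] (B : BivariantTheory.{w} C)
    (S : ∀ {X Y : C} (f : X ⟶ Y), Set (B.grp f)) {X Y : C} (f : X ⟶ Y) : Set (B.grp f) :=
  { x | ∀ I : B.Ideal, (∀ {X' Y' : C} (g : X' ⟶ Y'), S g ⊆ I.car g) → x ∈ I.car f }

/-!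
Every element `g_*(α • f^*(r) • β)` is built from `r ∈ S` by the ideal operations, so it lies in
`⟨S⟩`. Conversely, the subgroups generated by these elements already form a bivariant ideal,
and it contains `S` because `S` lives over `pt` (take `f = 𝟙 pt`, `g = 𝟙` and `α = β = 1`).
Products on the right are absorbed into `β` (A12), products on the left are moved past `g_*` by
the projection formula (A123) and absorbed into `α`, and pushforwards compose with `g`. A
pullback along `Y' → Y` is computed factor by factor (A23, A13): the pullback of `W ×_pt Z`
along `Z' → Z` is `W ×_pt Z'`, so `f^*(r)` pulls back to `f'^*(r)` with `f' : Z' → pt`.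
-/

open CategoryTheory.Limits

theorem AddSubgroup.map_mem_closure_of_map_add {G H : Type*} [AddGroup G] [AddGroup H]
    {F : G → H} (hF : ∀ x y, F (x + y) = F x + F y) {s : Set G} {t : Set H}
    (hst : ∀ x ∈ s, F x ∈ closure t) {x : G} (hx : x ∈ closure s) : F x ∈ closure t :=
  (closure_le ((closure t).comap (AddMonoidHom.mk' F hF))).mpr hst hx

namespace BivariantTheory

variable {C : Type u} [Category.{v} C] (B : BivariantTheory.{w} C)

def AllSquaresIndep : Prop :=
  ∀ {W X Y Z : C} {t : W ⟶ X} {l : W ⟶ Y} {f : X ⟶ Z} {g : Y ⟶ Z},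
    IsPullback t l f g → B.indep t l f g

variable (S : ∀ {X Y : C} (f : X ⟶ Y), Set (B.grp f))

/-- The products `α • f^*(r)` with `r ∈ S(W → pt)`, `f : Z → pt` and `α ∈ B(A → W ×_pt Z)`. -/
def mulPull {A Z : C} (c : A ⟶ Z) : Set (B.grp c) :=
  { L | ∃ (W P : C) (f₀ : W ⟶ B.pt) (r : B.grp f₀), r ∈ S f₀ ∧
      ∃ (fZ : Z ⟶ B.pt) (top : P ⟶ W) (left : P ⟶ Z) (sq : B.indep top left f₀ fZ)
        (a : A ⟶ P) (α : B.grp a) (e : a ≫ left = c), L = B.prod e α (B.pull sq r) }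

def mulPullMul {A Y : C} (d : A ⟶ Y) : Set (B.grp d) :=
  { z | ∃ (Z : C) (c : A ⟶ Z) (b : Z ⟶ Y) (e : c ≫ b = d) (L : B.grp c) (β : B.grp b),
      L ∈ B.mulPull @S c ∧ z = B.prod e L β }

def elementary {X Y : C} (h : X ⟶ Y) : Set (B.grp h) :=
  { y | ∃ (A : C) (g : A ⟶ X) (hg : B.confined g) (d : A ⟶ Y) (e : g ≫ h = d) (z : B.grp d),
      z ∈ B.mulPullMul @S d ∧ y = B.push hg e z }

variable {B S}

theorem prod_mem_mulPull_right {V A Z : C} {k : V ⟶ A} {c : A ⟶ Z} {m : V ⟶ Z}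
    (e : k ≫ c = m) (γ : B.grp k) {L : B.grp c} (hL : L ∈ B.mulPull @S c) :
    B.prod e γ L ∈ B.mulPull @S m := by
  obtain ⟨W, P, f₀, r, hr, fZ, top, left, sq, a, α, rfl, rfl⟩ := hL
  exact ⟨W, P, f₀, r, hr, fZ, top, left, sq, k ≫ a, B.prod rfl γ α,
    by rw [Category.assoc, e], (B.prod_assoc rfl rfl _ e γ α _).symm⟩

theorem pull_mem_mulPull (hAll : B.AllSquaresIndep) {A' A Z' Z : C} {t : A' ⟶ A} {l : A' ⟶ Z'}
    {c : A ⟶ Z} {q : Z' ⟶ Z} (sqI : B.indep t l c q) {L : B.grp c}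
    (hL : L ∈ B.mulPull @S c) : B.pull sqI L ∈ B.mulPull @S l := by
  have := B.hasPullbacks
  obtain ⟨W, P, f₀, r, hr, fZ, top, left, sq, a, α, rfl, rfl⟩ := hL
  have sqM := IsPullback.of_hasPullback left q
  set a' := pullback.lift (t ≫ a) l (by rw [Category.assoc, (B.indep_isPullback sqI).w])
  have sqU : IsPullback t a' a (pullback.fst left q) :=
    IsPullback.of_bot (by rw [pullback.lift_snd]; exact B.indep_isPullback sqI)
      (pullback.lift_fst _ _ _).symm sqM
  exact ⟨W, pullback left q, f₀, r, hr, q ≫ fZ, pullback.fst left q ≫ top, pullback.snd left q,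
    B.indep_paste₁ (hAll sqM) sq, a', B.pull (hAll sqU) α, pullback.lift_snd _ _ _,
    by rw [B.A13 (hAll sqU) (hAll sqM) sqI rfl (pullback.lift_snd _ _ _),
      B.pull_comp (hAll sqM) sq]⟩

theorem prod_mem_mulPullMul_left {A Y V : C} {d : A ⟶ Y} {k : Y ⟶ V} {m : A ⟶ V}
    (e : d ≫ k = m) {z : B.grp d} (γ : B.grp k) (hz : z ∈ B.mulPullMul @S d) :
    B.prod e z γ ∈ B.mulPullMul @S m := by
  obtain ⟨Z, c, b, rfl, L, β, hL, rfl⟩ := hz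
  exact ⟨Z, c, b ≫ k, by rw [← Category.assoc, e], L, B.prod rfl β γ, hL,
    B.prod_assoc rfl rfl e _ L β γ⟩

theorem prod_mem_mulPullMul_right {V A Y : C} {k : V ⟶ A} {d : A ⟶ Y} {m : V ⟶ Y}
    (e : k ≫ d = m) (γ : B.grp k) {z : B.grp d} (hz : z ∈ B.mulPullMul @S d) :
    B.prod e γ z ∈ B.mulPullMul @S m := by
  obtain ⟨Z, c, b, rfl, L, β, hL, rfl⟩ := hz
  exact ⟨Z, k ≫ c, b, by rw [Category.assoc, e], B.prod rfl γ L, β,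
    prod_mem_mulPull_right rfl γ hL, (B.prod_assoc rfl rfl _ e γ L β).symm⟩

theorem pull_mem_mulPullMul (hAll : B.AllSquaresIndep) {A' A Y' Y : C} {t : A' ⟶ A}
    {l : A' ⟶ Y'} {d : A ⟶ Y} {q : Y' ⟶ Y} (sqI : B.indep t l d q) {z : B.grp d}
    (hz : z ∈ B.mulPullMul @S d) : B.pull sqI z ∈ B.mulPullMul @S l := by
  have := B.hasPullbacks
  obtain ⟨Z, c, b, rfl, L, β, hL, rfl⟩ := hz
  have sqZ := IsPullback.of_hasPullback b q
  set c' := pullback.lift (t ≫ c) l (by rw [Category.assoc, (B.indep_isPullback sqI).w])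
  have sqU : IsPullback t c' c (pullback.fst b q) :=
    IsPullback.of_bot (by rw [pullback.lift_snd]; exact B.indep_isPullback sqI)
      (pullback.lift_fst _ _ _).symm sqZ
  exact ⟨pullback b q, c', pullback.snd b q, pullback.lift_snd _ _ _, B.pull (hAll sqU) L,
    B.pull (hAll sqZ) β, pull_mem_mulPull hAll _ hL,
    B.A13 (hAll sqU) (hAll sqZ) sqI rfl (pullback.lift_snd _ _ _) L β⟩

theorem push_mem_elementary {X X' Y : C} {φ : X ⟶ X'} (hφ : B.confined φ) {h' : X' ⟶ Y}
    {h : X ⟶ Y} (e : φ ≫ h' = h) {y : B.grp h} (hy : y ∈ B.elementary @S h) :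
    B.push hφ e y ∈ B.elementary @S h' := by
  obtain ⟨A, g, hg, d, rfl, z, hz, rfl⟩ := hy
  exact ⟨A, g ≫ φ, B.confined_comp hg hφ, g ≫ h, by rw [Category.assoc, e], z, hz,
    (B.push_comp hg hφ _ rfl rfl e _ z).symm⟩

theorem prod_mem_elementary_left {X Y V : C} {f : X ⟶ Y} {k : Y ⟶ V} {m : X ⟶ V}
    (e : f ≫ k = m) {y : B.grp f} (γ : B.grp k) (hy : y ∈ B.elementary @S f) :
    B.prod e y γ ∈ B.elementary @S m := by
  obtain ⟨A, g, hg, d, rfl, z, hz, rfl⟩ := hy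
  exact ⟨A, g, hg, (g ≫ f) ≫ k, by rw [← e, Category.assoc], B.prod rfl z γ,
    prod_mem_mulPullMul_left rfl γ hz, (B.A12 hg rfl rfl e _ z γ).symm⟩

theorem prod_mem_elementary_right (hAll : B.AllSquaresIndep) {V X Y : C} {k : V ⟶ X}
    {f : X ⟶ Y} {m : V ⟶ Y} (e : k ≫ f = m) (γ : B.grp k) {y : B.grp f}
    (hy : y ∈ B.elementary @S f) : B.prod e γ y ∈ B.elementary @S m := by
  have := B.hasPullbacks
  obtain ⟨A, g, hg, d, rfl, z, hz, rfl⟩ := hy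
  have sqV := IsPullback.of_hasPullback k g
  have hfst : B.confined (pullback.fst k g) := B.confined_baseChange sqV.flip hg
  have e' : pullback.fst k g ≫ m = pullback.snd k g ≫ g ≫ f := by
    rw [← e, ← Category.assoc, sqV.w, Category.assoc]
  exact ⟨pullback k g, pullback.fst k g, hfst, _, e', B.prod rfl (B.pull (hAll sqV) γ) z,
    prod_mem_mulPullMul_right rfl _ hz, (B.A123 (hAll sqV) hg hfst rfl rfl e' e γ z).symm⟩

theorem pull_mem_elementary (hAll : B.AllSquaresIndep) {X' X Y' Y : C} {t : X' ⟶ X}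
    {l : X' ⟶ Y'} {f : X ⟶ Y} {q : Y' ⟶ Y} (sqI : B.indep t l f q) {y : B.grp f}
    (hy : y ∈ B.elementary @S f) : B.pull sqI y ∈ B.elementary @S l := by
  have := B.hasPullbacks
  obtain ⟨A, g, hg, d, rfl, z, hz, rfl⟩ := hy
  have sqA := IsPullback.of_hasPullback g t
  have hsnd : B.confined (pullback.snd g t) := B.confined_baseChange sqA hg
  have sqBig := B.indep_paste₂ (hAll sqA) sqI
  exact ⟨pullback g t, pullback.snd g t, hsnd, _, rfl, B.pull sqBig z,
    pull_mem_mulPullMul hAll sqBig hz, B.A23 hg hsnd rfl rfl sqBig sqI sqA.w z⟩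

variable (S) in
def elementaryIdeal (hAll : B.AllSquaresIndep) : B.Ideal where
  car f := AddSubgroup.closure (B.elementary @S f)
  push_mem hf _ _ e _ := AddSubgroup.map_mem_closure_of_map_add (B.push_add hf e)
    fun _ hy => AddSubgroup.subset_closure (push_mem_elementary hf e hy)
  pull_mem sq _ := AddSubgroup.map_mem_closure_of_map_add (B.pull_add sq)
    fun _ hy => AddSubgroup.subset_closure (pull_mem_elementary hAll sq hy)
  prod_mem_left e _ β := AddSubgroup.map_mem_closure_of_map_add (B.prod_add_left e · · β)
    fun _ hy => AddSubgroup.subset_closure (prod_mem_elementary_left e β hy)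
  prod_mem_right e α _ := AddSubgroup.map_mem_closure_of_map_add (B.prod_add_right e α)
    fun _ hy => AddSubgroup.subset_closure (prod_mem_elementary_right hAll e α hy)

theorem mem_mulPull_of_mem {X : C} {f : X ⟶ B.pt} {r : B.grp f} (hr : r ∈ S f) :
    r ∈ B.mulPull @S f :=
  ⟨X, X, f, r, hr, 𝟙 B.pt, 𝟙 X, f, B.indep_id_horiz f, 𝟙 X, B.one X, Category.id_comp f,
    by rw [B.pull_id, B.one_prod]⟩

theorem mem_mulPullMul_of_mem_mulPull {A Y : C} {d : A ⟶ Y} {z : B.grp d}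
    (hz : z ∈ B.mulPull @S d) : z ∈ B.mulPullMul @S d :=
  ⟨Y, d, 𝟙 Y, Category.comp_id d, z, B.one Y, hz, (B.prod_one d z).symm⟩

theorem mem_elementary_of_mem_mulPullMul {X Y : C} {h : X ⟶ Y} {y : B.grp h}
    (hy : y ∈ B.mulPullMul @S h) : y ∈ B.elementary @S h :=
  ⟨X, 𝟙 X, B.confined_of_isIso _ inferInstance, h, Category.id_comp h, y, hy,
    (B.push_id _ _ y).symm⟩

theorem subset_elementary (hS : ∀ {X Y : C} (f : X ⟶ Y), Y ≠ B.pt → S f = ∅) {X Y : C}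
    (f : X ⟶ Y) : S f ⊆ B.elementary @S f := by
  intro r hr
  obtain rfl : Y = B.pt := by
    by_contra hY
    simp [hS f hY] at hr
  exact mem_elementary_of_mem_mulPullMul (mem_mulPullMul_of_mem_mulPull (mem_mulPull_of_mem hr))

theorem elementary_subset_ideal (I : B.Ideal) (hI : ∀ {X Y : C} (f : X ⟶ Y), S f ⊆ I.car f)
    {X Y : C} (h : X ⟶ Y) : B.elementary @S h ⊆ I.car h := by
  rintro _ ⟨A, g, hg, d, e, _, ⟨Z, c, b, e', _, β, ⟨W, P, f₀, r, hr, fZ, top, left, sq, a, α,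
    e'', rfl⟩, rfl⟩, rfl⟩
  exact I.push_mem hg e (I.prod_mem_left e' β (I.prod_mem_right e'' α (I.pull_mem sq (hI f₀ hr))))

theorem mem_genIdeal_iff_mem_closure_elementary (hAll : B.AllSquaresIndep)
    (hS : ∀ {X Y : C} (f : X ⟶ Y), Y ≠ B.pt → S f = ∅) {X Y : C} (h : X ⟶ Y) (x : B.grp h) :
    x ∈ B.genIdeal @S h ↔ x ∈ AddSubgroup.closure (B.elementary @S h) :=
  ⟨fun hx => hx (B.elementaryIdeal @S hAll) fun f _ hr =>
    AddSubgroup.subset_closure (subset_elementary hS f hr),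
   fun hx I hI => (AddSubgroup.closure_le (I.car h)).mpr (elementary_subset_ideal I hI h) hx⟩

end BivariantTheory

/-- **Lemma.** Let `B` be a bivariant theory in which every Cartesian square is independent,
and let `S` be a bivariant subset concentrated over the final object (`S(X → Y) = ∅` unless
`Y = pt`). Then the bivariant ideal `⟨S⟩` generated by `S` consists exactly of the finite
`ℤ`-linear combinations of elements of the form `g_*(α • f^*(r) • β)`, where
`r ∈ S(W → pt)`, `f : Z → pt` is an arbitrary morphism (so that `f^*(r) ∈ B(W × Z → Z)`),
`α ∈ B(A → W × Z)` and `β ∈ B(Z → Y)` are arbitrary bivariant elements, and `g : A → X` is a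
confined morphism making the expression well defined. -/
theorem genIdeal_eq_closure_of_elementary
    {C : Type u} [Category.{v} C] (B : BivariantTheory.{w} C)
    (hAll : ∀ {W X Y Z : C} {t : W ⟶ X} {l : W ⟶ Y} {f : X ⟶ Z} {g : Y ⟶ Z},
      IsPullback t l f g → B.indep t l f g)
    (S : ∀ {X Y : C} (f : X ⟶ Y), Set (B.grp f))
    (hconc : ∀ {X Y : C} (f : X ⟶ Y), Y ≠ B.pt → S f = ∅)
    {X Y : C} (h : X ⟶ Y) (x : B.grp h) :
    x ∈ B.genIdeal @S h ↔
      x ∈ AddSubgroup.closure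
        { y : B.grp h |
          ∃ (W P Z A : C) (f₀ : W ⟶ B.pt) (r : B.grp f₀), r ∈ S f₀ ∧
            ∃ (fZ : Z ⟶ B.pt) (top : P ⟶ W) (left : P ⟶ Z)
              (sq : IsPullback top left f₀ fZ)
              (a : A ⟶ P) (α : B.grp a) (b : Z ⟶ Y) (β : B.grp b)
              (c : A ⟶ Z) (e₁ : a ≫ left = c) (dm : A ⟶ Y) (e₂ : c ≫ b = dm)
              (g : A ⟶ X) (hg : B.confined g) (e₃ : g ≫ h = dm),
              y = B.push hg e₃ (B.prod e₂ (B.prod e₁ α (B.pull (hAll sq) r)) β) } := by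
  rw [B.mem_genIdeal_iff_mem_closure_elementary hAll hconc]
  congr! 3
  ext y
  constructor
  · rintro ⟨A, g, hg, d, e₃, _, ⟨Z, c, b, e₂, _, β, ⟨W, P, f₀, r, hr, fZ, top, left, sq, a, α,
      e₁, rfl⟩, rfl⟩, rfl⟩
    exact ⟨W, P, Z, A, f₀, r, hr, fZ, top, left, B.indep_isPullback sq, a, α, b, β, c, e₁, d,
      e₂, g, hg, e₃, rfl⟩
  · rintro ⟨W, P, Z, A, f₀, r, hr, fZ, top, left, sq, a, α, b, β, c, e₁, d, e₂, g, hg, e₃, rfl⟩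
    exact ⟨A, g, hg, d, e₃, _, ⟨Z, c, b, e₂, _, β, ⟨W, P, f₀, r, hr, fZ, top, left, hAll sq, a, α,
      e₁, rfl⟩, rfl⟩, rfl⟩
end

section
/- Let B be a bivariant theory in which every Cartesian square is independent, and let S be a bivariant subset of B concentrated over the final object (S(X → Y) is empty unless Y = pt) such that: each S(X → pt) is a subgroup of B(X → pt); S is closed under pushforwards, i.e. g_*(r) ∈ S(X' → pt) whenever g : X → X' is confined and r ∈ S(X → pt); S is closed under left multiplication by arbitrary bivariant elements, i.e. γ • r ∈ S(V → pt) for all γ ∈ B(V → X) and r ∈ S(X → pt); and S is closed under exterior products, i.e. f^*(r) • β ∈ S(X × Z → pt) for all r ∈ S(X → pt), all morphisms f : Z → pt, and all β ∈ B(Z → pt). Then the bivariant ideal generated by S satisfies ⟨S⟩(X → pt) = S(X → pt) for every object X. -/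
open CategoryTheory

universe w v u

/-!
Let `T(X → Y)` consist of those `α` such that `g^*(α) • β ∈ S` for every base change
`g : Y' → Y` and every homology class `β ∈ B(Y' → pt)`. Since every Cartesian square is
independent, the axioms (A12), (A13), (A23) move pushforwards, products and further pullbacks
through this test, so the closure properties of `S` make `T` a bivariant ideal; the exterior
product property puts `S` inside `T`. Over the point, testing with the identity square and
`β = 1_pt` shows `T(X → pt) ⊆ S(X → pt)`, which squeezes `⟨S⟩(X → pt)` between `S` and `T`.
-/

namespace BivariantTheory

variable {C : Type u} [Category.{v} C] (B : BivariantTheory.{w} C)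

def AllPullbacksIndep : Prop :=
  ∀ {W X Y Z : C} {t : W ⟶ X} {l : W ⟶ Y} {f : X ⟶ Z} {g : Y ⟶ Z},
    IsPullback t l f g → B.indep t l f g

def pullProd {W X Y Z P : C} {t : W ⟶ X} {l : W ⟶ Y} {f : X ⟶ Z} {g : Y ⟶ Z}
    (sq : B.indep t l f g) {q : Y ⟶ P} {p : W ⟶ P} (e : l ≫ q = p) (β : B.grp q) :
    B.grp f →+ B.grp p :=
  AddMonoidHom.mk' (fun α => B.prod e (B.pull sq α) β) fun α α' => by
    rw [B.pull_add, B.prod_add_left]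

@[simp]
theorem pullProd_apply {W X Y Z P : C} {t : W ⟶ X} {l : W ⟶ Y} {f : X ⟶ Z} {g : Y ⟶ Z}
    (sq : B.indep t l f g) {q : Y ⟶ P} {p : W ⟶ P} (e : l ≫ q = p) (β : B.grp q)
    (α : B.grp f) : B.pullProd sq e β α = B.prod e (B.pull sq α) β :=
  rfl

variable {B} (S : ∀ {X Y : C} (f : X ⟶ Y), Set (B.grp f))

def testSet {X Y : C} (f : X ⟶ Y) : Set (B.grp f) :=
  { α | ∀ ⦃W Y' : C⦄ ⦃t : W ⟶ X⦄ ⦃l : W ⟶ Y'⦄ ⦃g : Y' ⟶ Y⦄ (sq : B.indep t l f g)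
      ⦃q : Y' ⟶ B.pt⦄ (β : B.grp q) ⦃p : W ⟶ B.pt⦄ (e : l ≫ q = p), B.pullProd sq e β α ∈ S p }

theorem mem_of_mem_testSet {X : C} {f : X ⟶ B.pt} {α : B.grp f} (hα : α ∈ testSet S f) :
    α ∈ S f := by
  simpa only [pullProd_apply, B.pull_id, B.prod_one] using
    hα (B.indep_id_horiz f) (B.one B.pt) (Category.comp_id f)

theorem subset_testSet (hconc : ∀ {X Y : C} (f : X ⟶ Y), Y ≠ B.pt → S f = ∅)
    (hext : ∀ {X Z P : C} {f₀ : X ⟶ B.pt} {fZ : Z ⟶ B.pt} {top : P ⟶ X} {left : P ⟶ Z}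
      (sq : B.indep top left f₀ fZ) {r : B.grp f₀}, r ∈ S f₀ → ∀ (β : B.grp fZ)
      {fP : P ⟶ B.pt} (e : left ≫ fZ = fP), B.prod e (B.pull sq r) β ∈ S fP)
    {X Y : C} (f : X ⟶ Y) : S f ⊆ testSet S f := by
  intro r hr
  by_cases hY : Y = B.pt
  · subst hY
    intro W Y' t l g sq q β p e
    obtain rfl : q = g := B.isTerminal.hom_ext q g
    exact hext sq hr β e
  · simp [hconc f hY] at hr

theorem pull_mem_testSet {W X Y Z : C} {t : W ⟶ X} {l : W ⟶ Y} {f : X ⟶ Z} {g : Y ⟶ Z}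
    (sq : B.indep t l f g) {α : B.grp f} (hα : α ∈ testSet S f) :
    B.pull sq α ∈ testSet S l := by
  intro W' Y' t' l' g' sq' q β p e
  have hpaste := B.indep_paste₁ sq' sq
  simpa only [pullProd_apply, ← B.pull_comp sq' sq hpaste] using hα hpaste β e

theorem push_mem_testSet (hAll : B.AllPullbacksIndep)
    (hpush : ∀ {X X' : C} {g : X ⟶ X'} (hg : B.confined g) {f' : X' ⟶ B.pt} {f : X ⟶ B.pt}
      (e : g ≫ f' = f) {r : B.grp f}, r ∈ S f → B.push hg e r ∈ S f')
    {X X' Y : C} {u : X ⟶ X'} (hu : B.confined u) {h' : X' ⟶ Y} {h : X ⟶ Y}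
    (e : u ≫ h' = h) {α : B.grp h} (hα : α ∈ testSet S h) :
    B.push hu e α ∈ testSet S h' := by
  have := B.hasPullbacks
  intro W Y' t l g sq q β p ep
  have pb := IsPullback.of_hasPullback u t
  have hsnd : B.confined (Limits.pullback.snd u t) := B.confined_baseChange pb hu
  have sqBig : B.indep (Limits.pullback.fst u t) (Limits.pullback.snd u t ≫ l) h g :=
    e ▸ B.indep_paste₂ (hAll pb) sq
  have e₂ : (Limits.pullback.snd u t ≫ l) ≫ q = Limits.pullback.snd u t ≫ p := by
    rw [Category.assoc, ep]
  rw [pullProd_apply, B.A23 hu hsnd e rfl sqBig sq pb.w α,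
    ← B.A12 hsnd rfl e₂ ep rfl (B.pull sqBig α) β]
  exact hpush hsnd rfl (hα sqBig β e₂)

theorem exists_pull_prod_eq (hAll : B.AllPullbacksIndep) {W X Y Z Z' : C} {t : W ⟶ X}
    {l : W ⟶ Z'} {f : X ⟶ Y} {g : Y ⟶ Z} {k : Z' ⟶ Z} (sq : B.indep t l (f ≫ g) k)
    (α : B.grp f) (β : B.grp g) :
    ∃ (P : C) (m : W ⟶ P) (u : P ⟶ Y) (v : P ⟶ Z') (sqTop : B.indep t m f u)
      (sqBot : B.indep u v g k) (hm : m ≫ v = l),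
      B.pull sq (B.prod rfl α β) = B.prod hm (B.pull sqTop α) (B.pull sqBot β) := by
  have := B.hasPullbacks
  have pbBot := IsPullback.of_hasPullback g k
  have w : (t ≫ f) ≫ g = l ≫ k := by rw [Category.assoc]; exact (B.indep_isPullback sq).w
  have hm := pbBot.lift_snd _ _ w
  have pbTop : IsPullback t (pbBot.lift _ _ w) f (Limits.pullback.fst g k) :=
    IsPullback.of_bot (hm.symm ▸ B.indep_isPullback sq) (pbBot.lift_fst _ _ w).symm pbBot
  exact ⟨_, _, _, _, hAll pbTop, hAll pbBot, hm, B.A13 _ _ sq rfl hm α β⟩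

theorem prod_mem_testSet_left (hAll : B.AllPullbacksIndep) {X Y Z : C} {f : X ⟶ Y}
    {g : Y ⟶ Z} {h : X ⟶ Z} (e : f ≫ g = h) {α : B.grp f} (β : B.grp g)
    (hα : α ∈ testSet S f) : B.prod e α β ∈ testSet S h := by
  subst e
  intro W Y' t l k sq q δ p ep
  obtain ⟨P, m, u, v, sqTop, sqBot, hm, hA13⟩ := exists_pull_prod_eq hAll sq α β
  have e₄ : m ≫ v ≫ q = p := by rw [← Category.assoc, hm, ep]
  rw [pullProd_apply, hA13, B.prod_assoc hm rfl ep e₄]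
  exact hα sqTop _ e₄

theorem prod_mem_testSet_right (hAll : B.AllPullbacksIndep)
    (hmul : ∀ {V X : C} {v : V ⟶ X} (γ : B.grp v) {f : X ⟶ B.pt} {f' : V ⟶ B.pt}
      (e : v ≫ f = f') {r : B.grp f}, r ∈ S f → B.prod e γ r ∈ S f')
    {X Y Z : C} {f : X ⟶ Y} {g : Y ⟶ Z} {h : X ⟶ Z} (e : f ≫ g = h) (α : B.grp f)
    {β : B.grp g} (hβ : β ∈ testSet S g) : B.prod e α β ∈ testSet S h := by
  subst e
  intro W Y' t l k sq q δ p ep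
  obtain ⟨P, m, u, v, sqTop, sqBot, hm, hA13⟩ := exists_pull_prod_eq hAll sq α β
  have e₄ : m ≫ v ≫ q = p := by rw [← Category.assoc, hm, ep]
  rw [pullProd_apply, hA13, B.prod_assoc hm rfl ep e₄]
  exact hmul _ e₄ (hβ sqBot δ rfl)

def testIdeal (hAll : B.AllPullbacksIndep)
    (hzero : ∀ {X : C} (f : X ⟶ B.pt), (0 : B.grp f) ∈ S f)
    (hadd : ∀ {X : C} (f : X ⟶ B.pt) {r r' : B.grp f}, r ∈ S f → r' ∈ S f → r + r' ∈ S f)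
    (hneg : ∀ {X : C} (f : X ⟶ B.pt) {r : B.grp f}, r ∈ S f → -r ∈ S f)
    (hpush : ∀ {X X' : C} {g : X ⟶ X'} (hg : B.confined g) {f' : X' ⟶ B.pt} {f : X ⟶ B.pt}
      (e : g ≫ f' = f) {r : B.grp f}, r ∈ S f → B.push hg e r ∈ S f')
    (hmul : ∀ {V X : C} {v : V ⟶ X} (γ : B.grp v) {f : X ⟶ B.pt} {f' : V ⟶ B.pt}
      (e : v ≫ f = f') {r : B.grp f}, r ∈ S f → B.prod e γ r ∈ S f') :
    B.Ideal where
  car f :=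
    { carrier := testSet S f
      zero_mem' := fun _ _ _ _ _ sq _ β p e => by simpa only [map_zero] using hzero p
      add_mem' := fun ha hb _ _ _ _ _ sq _ β p e => by
        simpa only [map_add] using hadd p (ha sq β e) (hb sq β e)
      neg_mem' := fun ha _ _ _ _ _ sq _ β p e => by
        simpa only [map_neg] using hneg p (ha sq β e) }
  push_mem := push_mem_testSet S hAll hpush
  pull_mem := pull_mem_testSet S
  prod_mem_left := prod_mem_testSet_left S hAll
  prod_mem_right := prod_mem_testSet_right S hAll hmul

end BivariantTheory

/-- **Proposition.** Let `B` be a bivariant theory in which every Cartesian square is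
independent, and let `S` be a bivariant subset concentrated over the final object such that
each `S(X → pt)` is a subgroup, and `S` is closed under pushforwards, under left
multiplication by arbitrary bivariant elements, and under exterior products by arbitrary
homology elements. Then the bivariant ideal generated by `S` satisfies
`⟨S⟩(X → pt) = S(X → pt)` for every object `X`. -/
theorem genIdeal_over_point
    {C : Type u} [Category.{v} C] (B : BivariantTheory.{w} C)
    (hAll : ∀ {W X Y Z : C} {t : W ⟶ X} {l : W ⟶ Y} {f : X ⟶ Z} {g : Y ⟶ Z},
      IsPullback t l f g → B.indep t l f g)
    (S : ∀ {X Y : C} (f : X ⟶ Y), Set (B.grp f))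
    (hconc : ∀ {X Y : C} (f : X ⟶ Y), Y ≠ B.pt → S f = ∅)
    -- each `S(X → pt)` is a subgroup
    (hzero : ∀ {X : C} (f : X ⟶ B.pt), (0 : B.grp f) ∈ S f)
    (hadd : ∀ {X : C} (f : X ⟶ B.pt) {r r' : B.grp f}, r ∈ S f → r' ∈ S f → r + r' ∈ S f)
    (hneg : ∀ {X : C} (f : X ⟶ B.pt) {r : B.grp f}, r ∈ S f → -r ∈ S f)
    -- `S` is closed under pushforwards along confined morphisms
    (hpush : ∀ {X X' : C} {g : X ⟶ X'} (hg : B.confined g) {f' : X' ⟶ B.pt} {f : X ⟶ B.pt}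
      (e : g ≫ f' = f) {r : B.grp f}, r ∈ S f → B.push hg e r ∈ S f')
    -- `S` is closed under left multiplication by arbitrary bivariant elements
    (hmul : ∀ {V X : C} {v : V ⟶ X} (γ : B.grp v) {f : X ⟶ B.pt} {f' : V ⟶ B.pt}
      (e : v ≫ f = f') {r : B.grp f}, r ∈ S f → B.prod e γ r ∈ S f')
    -- `S` is closed under exterior products `f^*(r) • β` by arbitrary elements
    (hext : ∀ {X Z P : C} {f₀ : X ⟶ B.pt} {fZ : Z ⟶ B.pt} {top : P ⟶ X} {left : P ⟶ Z}
      (sq : IsPullback top left f₀ fZ) {r : B.grp f₀} (hr : r ∈ S f₀) (β : B.grp fZ)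
      {fP : P ⟶ B.pt} (e : left ≫ fZ = fP),
      B.prod e (B.pull (hAll sq) r) β ∈ S fP)
    (X : C) (f : X ⟶ B.pt) :
    B.genIdeal @S f = S f := by
  have hS : ∀ {X' Y' : C} (g : X' ⟶ Y'),
      S g ⊆ (B.testIdeal S hAll hzero hadd hneg hpush hmul).car g :=
    B.subset_testSet S hconc fun sq _ hr β _ e => hext (B.indep_isPullback sq) hr β e
  exact Set.Subset.antisymm (fun α hα => B.mem_of_mem_testSet S (hα _ hS))
    fun α hα _ hI => hI f hα
end

section
/- Let B be a bivariant theory with an orientation θ along a class of specialized morphisms. Let π : P → X be a morphism and let s : X → P be a section of π (i.e. π ∘ s = id_X) which is both confined and specialized. Then for every d ∈ B*(X) = B(X → X) one has s^*(s_*(d • θ(s))) = d • s^*(s_*(θ(s))) in B*(X), where s^* denotes the bivariant cohomology pullback along s and s_* the bivariant pushforward along the confined morphism s. (Equivalently, writing s_! (γ) := s_*(γ • θ(s)): s^*(s_!(d)) = d • s^*(s_!(1_X)).) -/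
open CategoryTheory

universe w v u

/-! Pulling back along `indep_id_vert g` is the cohomology pullback `g^* : B*(Y) → B*(X)`.
Since `s` is a section of `π`, `d = s^*(π^* d)`; the projection formula (A123) for `s` then gives
`s_*(d • θ(s)) = π^* d • s_*(θ(s))`, and applying the multiplicative map `s^*` (A13) turns
`π^* d` back into `d`. -/

namespace BivariantTheory

variable {C : Type u} [Category.{v} C] (B : BivariantTheory.{w} C)

theorem pull_indep_id_vert_of_eq_id {X : C} {f : X ⟶ X} (hf : f = 𝟙 X) (α : B.grp (𝟙 X)) :
    B.pull (B.indep_id_vert f) α = α := by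
  subst hf
  exact B.pull_id _ α

theorem pull_indep_id_vert_comp {X Y Z : C} (f : X ⟶ Y) (g : Y ⟶ Z) (α : B.grp (𝟙 Z)) :
    B.pull (B.indep_id_vert (f ≫ g)) α
      = B.pull (B.indep_id_vert f) (B.pull (B.indep_id_vert g) α) :=
  B.pull_comp (B.indep_id_vert f) (B.indep_id_vert g) (B.indep_id_vert (f ≫ g)) α

theorem pull_indep_id_vert_prod {X Y : C} (g : X ⟶ Y) (α β : B.grp (𝟙 Y)) :
    B.pull (B.indep_id_vert g) (B.prod (Category.id_comp (𝟙 Y)) α β)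
      = B.prod (Category.id_comp (𝟙 X))
          (B.pull (B.indep_id_vert g) α) (B.pull (B.indep_id_vert g) β) :=
  B.A13 (B.indep_id_vert g) (B.indep_id_vert g) (B.indep_id_vert g) _ _ α β

theorem push_prod_pull_indep_id_vert {X P Z : C} {s : X ⟶ P} (hs : B.confined s)
    {q : P ⟶ Z} {r : X ⟶ Z} (e : s ≫ q = r) (α : B.grp (𝟙 P)) (β : B.grp r) :
    B.push hs e (B.prod (Category.id_comp r) (B.pull (B.indep_id_vert s) α) β)
      = B.prod (Category.id_comp q) α (B.push hs e β) :=
  B.A123 (B.indep_id_vert s) hs hs e _ e _ α β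

end BivariantTheory

/-- **Lemma (section formula).** Let `B` be a bivariant theory with an orientation `θ`, let
`π : P ⟶ X` have a section `s : X ⟶ P` (so `s ≫ π = 𝟙 X`) which is both confined and
specialized. Then for every `d ∈ B*(X) = B(X → X)` one has
`s^*(s_*(d • θ(s))) = d • s^*(s_*(1_X • θ(s)))` in `B*(X)`; equivalently, writing
`s_!(γ) := s_*(γ • θ(s))`, this reads `s^*(s_!(d)) = d • s^*(s_!(1_X))`. -/
theorem pull_gysin_push_section
    {C : Type u} [Category.{v} C] (B : BivariantTheory.{w} C) (o : B.Orientation)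
    {X P : C} (π : P ⟶ X) (s : X ⟶ P) (hsection : s ≫ π = 𝟙 X)
    (hsc : B.confined s) (hs : o.specialized s) (d : B.grp (𝟙 X)) :
    B.pull (B.indep_id_vert s)
        (B.push hsc (Category.comp_id s) (B.prod (Category.id_comp s) d (o.θ hs)))
      = B.prod (Category.id_comp (𝟙 X)) d
          (B.pull (B.indep_id_vert s)
            (B.push hsc (Category.comp_id s)
              (B.prod (Category.id_comp s) (B.one X) (o.θ hs)))) := by
  have hd : B.pull (B.indep_id_vert s) (B.pull (B.indep_id_vert π) d) = d := by
    rw [← B.pull_indep_id_vert_comp, B.pull_indep_id_vert_of_eq_id hsection]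
  calc B.pull (B.indep_id_vert s)
        (B.push hsc (Category.comp_id s) (B.prod (Category.id_comp s) d (o.θ hs)))
      = B.pull (B.indep_id_vert s) (B.prod (Category.id_comp (𝟙 P))
          (B.pull (B.indep_id_vert π) d) (B.push hsc (Category.comp_id s) (o.θ hs))) := by
        rw [← B.push_prod_pull_indep_id_vert, hd]
    _ = B.prod (Category.id_comp (𝟙 X)) d
          (B.pull (B.indep_id_vert s) (B.push hsc (Category.comp_id s) (o.θ hs))) := by
        rw [B.pull_indep_id_vert_prod, hd]
    _ = _ := by rw [B.one_prod]
end

section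
/- Let R be a commutative ring and let F(u,v), F₋(u,v) ∈ R[[u,v]] be formal power series with zero constant term satisfying F(F₋(u,v),v) = u and F₋(F(u,v),v) = u in R[[u,v]] (all substitutions being well defined since the series substituted have zero constant term). Fix an integer r ≥ 1 and work in R[[μ₁,…,μ_r,x]]; let s_i denote the i-th elementary symmetric polynomial in μ₁,…,μ_r. For 1 ≤ i ≤ r define G^i := s_i(F(μ₁,x),…,F(μ_r,x)) and G₋^i := s_i(F₋(μ₁,x),…,F₋(μ_r,x)). Then there exist formal power series H^i, H₋^i ∈ R[[t₁,…,t_r,x]] such that G^i = H^i(s₁,…,s_r,x) and G₋^i = H₋^i(s₁,…,s_r,x), and these satisfy the inverse identities H^i(G₋^1,…,G₋^r,x) = s_i and H₋^i(G^1,…,G^r,x) = s_i in R[[μ₁,…,μ_r,x]]. -/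
open MvPowerSeries

noncomputable section

/-- Substitution of a family of multivariate power series (each with vanishing constant
term) into a power series in finitely many variables. For such substitutions,
the coefficient of a monomial `d` in the composite is the finite sum over exponent vectors
`e` of total degree at most `|d|` of `coeff e f * coeff d (∏ᵢ tᵢ^{eᵢ})`; we take this
formula as the definition. -/
def msubst {R : Type*} [CommRing R] {σ τ : Type*} [Fintype σ] [DecidableEq σ]
    (t : σ → MvPowerSeries τ R) (f : MvPowerSeries σ R) : MvPowerSeries τ R :=
  fun d =>
    ∑ e ∈ Fintype.piFinset fun _ : σ => Finset.range (d.sum (fun _ n => n) + 1),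
      MvPowerSeries.coeff (Finsupp.equivFunOnFinite.symm e) f *
        MvPowerSeries.coeff d (∏ i, t i ^ e i)

end

/-!
Permuting the `μ`'s commutes with the substitution `μⱼ ↦ F(μⱼ, x)`, so `Gⁱ` and `G₋ⁱ` are
symmetric in the `μ`'s. A power series symmetric in the `μ`'s is a power series in
`s₁, …, s_r, x`: its homogeneous component of degree `n` is a symmetric polynomial, hence, by the
fundamental theorem over `R[x]`, a polynomial of weight `n` in the `sᵢ` (of weight `i`) and `x`
(of weight `1`). These polynomials add up to a power series `H` with `H(s, x)` well behaved,
because substituting `s` and `x` turns a monomial of weight `n` into a series of order `≥ n`.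
The inverse identities are then formal: substituting `μⱼ ↦ F₋(μⱼ, x)` into `Gⁱ = Hⁱ(s, x)` gives
`Hⁱ(G₋, x) = sᵢ(F(F₋(μ, x), x)) = sᵢ`.
-/
open Finset

namespace MvPowerSeries

variable {R : Type*} [CommRing R] {σ τ : Type*}

theorem weight_le_order_prod_pow {a : σ → MvPowerSeries τ R} {w : σ → ℕ}
    (hw : ∀ s, (w s : ℕ∞) ≤ (a s).order) (e : σ →₀ ℕ) :
    (e.weight w : ℕ∞) ≤ (e.prod fun s n => a s ^ n).order :=
  calc (e.weight w : ℕ∞) = ∑ s ∈ e.support, e s • (w s : ℕ∞) := by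
        simp [Finsupp.weight_apply, Finsupp.sum]
    _ ≤ ∑ s ∈ e.support, (a s ^ e s).order :=
        sum_le_sum fun s _ => (nsmul_le_nsmul_right (hw s) _).trans (le_order_pow _)
    _ ≤ _ := le_order_prod _ _

theorem weightedOrder_le_order_subst {a : σ → MvPowerSeries τ R} {w : σ → ℕ} (ha : HasSubst a)
    (hw : ∀ s, (w s : ℕ∞) ≤ (a s).order) (f : MvPowerSeries σ R) :
    f.weightedOrder w ≤ (subst a f).order := by
  refine le_order fun d hd => ?_
  rw [coeff_subst ha, finsum_eq_zero_of_forall_eq_zero]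
  intro e
  by_cases he : coeff e f = 0
  · rw [he, zero_smul]
  · rw [coeff_of_lt_order (hd.trans_le ((weightedOrder_le w he).trans
      (weight_le_order_prod_pow hw e))), smul_zero]

end MvPowerSeries

theorem msubst_eq_subst {R : Type*} [CommRing R] {σ τ : Type*} [Fintype σ] [DecidableEq σ]
    {t : σ → MvPowerSeries τ R} (ht : ∀ s, constantCoeff (t s) = 0) (f : MvPowerSeries σ R) :
    msubst t f = subst t f := by
  ext d
  have hbox : Function.support (fun e => coeff e f • coeff d (e.prod fun s n => t s ^ n)) ⊆
      ((Fintype.piFinset fun _ => range (d.degree + 1)).map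
        (Finsupp.equivFunOnFinite (α := σ)).symm.toEmbedding : Set (σ →₀ ℕ)) := by
    intro e he
    have hdeg : (e.degree : ℕ∞) ≤ d.degree := by
      have := weight_le_order_prod_pow (fun s => one_le_order_iff_constCoeff_eq_zero.2 (ht s)) e
      rw [← Finsupp.degree_eq_weight_one] at this
      exact this.trans (not_lt.1 (mt coeff_of_lt_order (right_ne_zero_of_smul he)))
    simpa [Fintype.mem_piFinset, Nat.lt_succ_iff] using
      fun s => (Finsupp.le_degree s e).trans (mod_cast hdeg)
  rw [coeff_subst (hasSubst_of_constantCoeff_zero ht), finsum_eq_sum_of_support_subset _ hbox,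
    sum_map]
  refine sum_congr rfl fun e _ => ?_
  simp [Finsupp.prod_fintype]

namespace MvPolynomial

section CommSemiring

variable {R : Type*} [CommSemiring R] {σ τ : Type*}

theorem isHomogeneous_esymm [Fintype σ] (n : ℕ) : (esymm σ R n).IsHomogeneous n := by
  refine IsHomogeneous.sum _ _ _ fun t ht => ?_
  simpa [(mem_powersetCard.1 ht).2] using
    IsHomogeneous.prod t (fun i => (X i : MvPolynomial σ R)) (fun _ => 1)
      fun i _ => isHomogeneous_X R i

theorem isHomogeneous_aeval_monomial {q : σ → MvPolynomial τ R} {w : σ → ℕ}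
    (hq : ∀ s, (q s).IsHomogeneous (w s)) (e : σ →₀ ℕ) (a : R) :
    (aeval q (monomial e a)).IsHomogeneous (e.weight w) := by
  rw [aeval_monomial, Finsupp.weight_apply, Finsupp.sum, ← zero_add (∑ _ ∈ _, _)]
  refine (isHomogeneous_C _ a).mul (IsHomogeneous.prod _ _ _ fun s _ => ?_)
  simpa [mul_comm] using (hq s).pow (e s)

theorem homogeneousComponent_aeval {q : σ → MvPolynomial τ R} {w : σ → ℕ}
    (hq : ∀ s, (q s).IsHomogeneous (w s)) (V : MvPolynomial σ R) (n : ℕ) :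
    homogeneousComponent n (aeval q V) = aeval q (weightedHomogeneousComponent w n V) := by
  classical
  induction V using MvPolynomial.induction_on' with
  | add p p' hp hp' => simp only [map_add, hp, hp']
  | monomial e a =>
    rw [homogeneousComponent_of_mem (isHomogeneous_aeval_monomial hq e a),
      weightedHomogeneousComponent_of_mem (isWeightedHomogeneous_monomial w e a rfl)]
    split_ifs <;> simp

end CommSemiring

variable {R : Type*} [CommRing R] {τ : Type*}

/-- The generators `e₁(μ), …, e_r(μ)` (indexed from `0` by `Fin r`) and `y_t` of the polynomials
in `μ₁, …, μ_r, y` that are symmetric in the `μ`'s. -/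
noncomputable def symmetricGenerators (R : Type*) [CommRing R] (r : ℕ) (τ : Type*) :
    Fin r ⊕ τ → MvPolynomial (Fin r ⊕ τ) R :=
  Sum.elim (fun i => rename Sum.inl (esymm (Fin r) R (i + 1))) fun t => X (Sum.inr t)

def symmetricWeight (r : ℕ) (τ : Type*) : Fin r ⊕ τ → ℕ :=
  Sum.elim (fun i => i + 1) fun _ => 1

variable {r : ℕ}

theorem isHomogeneous_symmetricGenerators (v : Fin r ⊕ τ) :
    (symmetricGenerators R r τ v).IsHomogeneous (symmetricWeight r τ v) := by
  rcases v with i | t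
  · exact (isHomogeneous_esymm _).rename_isHomogeneous
  · exact isHomogeneous_X R _

theorem sumAlgEquiv_aeval_symmetricGenerators (V : MvPolynomial (Fin r ⊕ τ) R) :
    sumAlgEquiv R (Fin r) τ (aeval (symmetricGenerators R r τ) V) =
      aeval (fun i : Fin r => esymm (Fin r) (MvPolynomial τ R) (i + 1))
        (sumAlgEquiv R (Fin r) τ V) := by
  suffices ((sumAlgEquiv R (Fin r) τ).toAlgHom.comp (aeval (symmetricGenerators R r τ))) =
      ((aeval fun i : Fin r => esymm (Fin r) (MvPolynomial τ R) (i + 1)).restrictScalars R).comp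
        (sumAlgEquiv R (Fin r) τ).toAlgHom from DFunLike.congr_fun this V
  refine algHom_ext fun v => ?_
  rcases v with i | t
  · simpa [symmetricGenerators, map_esymm] using
      DFunLike.congr_fun (sumAlgEquiv_comp_rename_inl R (Fin r) τ) (esymm (Fin r) R (i + 1))
  · simp [symmetricGenerators]

theorem sumAlgEquiv_rename_sumCongr (π : Equiv.Perm (Fin r)) (p : MvPolynomial (Fin r ⊕ τ) R) :
    sumAlgEquiv R (Fin r) τ (rename (Equiv.sumCongr π (Equiv.refl τ)) p) =
      rename π (sumAlgEquiv R (Fin r) τ p) := by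
  suffices ((sumAlgEquiv R (Fin r) τ).toAlgHom.comp
      (rename (Equiv.sumCongr π (Equiv.refl τ)))) =
      ((rename π).restrictScalars R).comp (sumAlgEquiv R (Fin r) τ).toAlgHom from
    DFunLike.congr_fun this p
  refine algHom_ext fun v => ?_
  rcases v with i | t <;> simp

theorem exists_aeval_symmetricGenerators_eq {p : MvPolynomial (Fin r ⊕ τ) R}
    (hp : ∀ π : Equiv.Perm (Fin r), rename (Equiv.sumCongr π (Equiv.refl τ)) p = p) :
    ∃ V : MvPolynomial (Fin r ⊕ τ) R, aeval (symmetricGenerators R r τ) V = p := by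
  have hsymm : (sumAlgEquiv R (Fin r) τ p).IsSymmetric := fun π => by
    rw [← sumAlgEquiv_rename_sumCongr, hp]
  obtain ⟨V, hV⟩ := esymmAlgHom_surjective (MvPolynomial τ R) (n := r) (by simp) ⟨_, hsymm⟩
  refine ⟨(sumAlgEquiv R (Fin r) τ).symm V, (sumAlgEquiv R (Fin r) τ).injective ?_⟩
  rw [sumAlgEquiv_aeval_symmetricGenerators, AlgEquiv.apply_symm_apply]
  simpa [esymmAlgHom_apply] using congr_arg Subtype.val hV

theorem exists_isWeightedHomogeneous_aeval_symmetricGenerators_eq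
    {p : MvPolynomial (Fin r ⊕ τ) R} {n : ℕ}
    (hp : ∀ π : Equiv.Perm (Fin r), rename (Equiv.sumCongr π (Equiv.refl τ)) p = p)
    (hpn : p.IsHomogeneous n) :
    ∃ W : MvPolynomial (Fin r ⊕ τ) R, W.IsWeightedHomogeneous (symmetricWeight r τ) n ∧
      aeval (symmetricGenerators R r τ) W = p := by
  obtain ⟨V, rfl⟩ := exists_aeval_symmetricGenerators_eq hp
  refine ⟨weightedHomogeneousComponent (symmetricWeight r τ) n V,
    weightedHomogeneousComponent_isWeightedHomogeneous n V, ?_⟩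
  rw [← homogeneousComponent_aeval isHomogeneous_symmetricGenerators,
    homogeneousComponent_of_mem hpn, if_pos rfl]

end MvPolynomial

namespace MvPowerSeries

open MvPolynomial (symmetricGenerators symmetricWeight esymm)

variable {R : Type*} [CommRing R] {σ τ : Type*}

theorem coe_aeval_eq_aeval_coe (q : σ → MvPolynomial τ R) (p : MvPolynomial σ R) :
    ((MvPolynomial.aeval q p : MvPolynomial τ R) : MvPowerSeries τ R) =
      MvPolynomial.aeval (fun s => (q s : MvPowerSeries τ R)) p := by
  simpa using MvPolynomial.comp_aeval_apply (f := q) (MvPolynomial.coeToMvPowerSeries.algHom R) p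

theorem le_order_coe_of_isHomogeneous {p : MvPolynomial σ R} {n : ℕ} (hp : p.IsHomogeneous n) :
    (n : ℕ∞) ≤ (p : MvPowerSeries σ R).order :=
  le_order fun d hd => by
    rw [MvPolynomial.coeff_coe]
    exact hp.coeff_eq_zero (by exact_mod_cast hd.ne)

theorem homogeneousComponent_rename_equiv (e : σ ≃ τ) (P : MvPowerSeries σ R) (n : ℕ) :
    homogeneousComponent n (rename e P) = rename e (homogeneousComponent n P) := by
  ext x
  obtain ⟨y, rfl⟩ : ∃ y, Finsupp.embDomain e.toEmbedding y = x :=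
    ⟨x.mapDomain e.symm, by
      rw [Finsupp.embDomain_eq_mapDomain, Equiv.coe_toEmbedding, ← Finsupp.mapDomain_comp,
        Equiv.self_comp_symm, Finsupp.mapDomain_id]⟩
  have h := coeff_embDomain_rename (R := R) e.toEmbedding
  simp only [Equiv.coe_toEmbedding] at h
  rw [coeff_homogeneousComponent, h, h, coeff_homogeneousComponent, Finsupp.embDomain_eq_mapDomain,
    Finsupp.degree_mapDomain]

theorem coe_homogeneousComponent_truncTotal [Finite σ] (P : MvPowerSeries σ R) (n : ℕ) :
    (MvPolynomial.homogeneousComponent n (truncTotal (n + 1) P) : MvPowerSeries σ R) =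
      homogeneousComponent n P := by
  ext d
  rw [MvPolynomial.coeff_coe, MvPolynomial.coeff_homogeneousComponent, coeff_truncTotal_eq_ite,
    coeff_homogeneousComponent]
  split_ifs <;> first | rfl | omega

noncomputable def ofWeightedHomogeneous (w : σ → ℕ) (W : ℕ → MvPolynomial σ R) :
    MvPowerSeries σ R :=
  fun e => (W (e.weight w)).coeff e

theorem lt_weightedOrder_ofWeightedHomogeneous_sub {w : σ → ℕ} {W : ℕ → MvPolynomial σ R}
    (hW : ∀ n, (W n).IsWeightedHomogeneous w n) (N : ℕ) :
    (N : ℕ∞) < (ofWeightedHomogeneous w W -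
      ∑ n ∈ range (N + 1), (W n : MvPowerSeries σ R)).weightedOrder w := by
  refine Order.add_one_le_iff_of_not_isMax (by simp) |>.1 <| le_weightedOrder w fun e he => ?_
  have he : e.weight w < N + 1 := by exact_mod_cast he
  rw [map_sub, map_sum, sub_eq_zero, sum_eq_single_of_mem _ (mem_range.2 he)]
  · rfl
  · refine fun n _ hn => ?_
    rw [MvPolynomial.coeff_coe]
    exact by_contra fun h => hn (hW n h).symm

variable {r : ℕ}

theorem symmetricWeight_le_order_symmetricGenerators (v : Fin r ⊕ τ) :
    (symmetricWeight r τ v : ℕ∞) ≤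
      (symmetricGenerators R r τ v : MvPowerSeries (Fin r ⊕ τ) R).order :=
  le_order_coe_of_isHomogeneous (MvPolynomial.isHomogeneous_symmetricGenerators v)

theorem constantCoeff_symmetricGenerators (v : Fin r ⊕ τ) :
    constantCoeff (symmetricGenerators R r τ v : MvPowerSeries (Fin r ⊕ τ) R) = 0 :=
  one_le_order_iff_constCoeff_eq_zero.1 <|
    le_trans (by rcases v with i | t <;> simp [symmetricWeight])
      (symmetricWeight_le_order_symmetricGenerators v)

theorem coe_symmetricGenerators_inl (i : Fin r) :
    (symmetricGenerators R r τ (Sum.inl i) : MvPowerSeries (Fin r ⊕ τ) R) =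
      MvPolynomial.aeval (fun j => X (Sum.inl j)) (esymm (Fin r) R (i + 1)) := by
  rw [symmetricGenerators, Sum.elim_inl, MvPolynomial.rename_eq_aeval, coe_aeval_eq_aeval_coe]
  simp

theorem coe_symmetricGenerators_inr (t : τ) :
    (symmetricGenerators R r τ (Sum.inr t) : MvPowerSeries (Fin r ⊕ τ) R) = X (Sum.inr t) := by
  rw [symmetricGenerators, Sum.elim_inr, MvPolynomial.coe_X]

theorem rename_coe_symmetricGenerators_inl (π : Equiv.Perm (Fin r)) (i : Fin r) :
    rename (Equiv.sumCongr π (Equiv.refl τ))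
        (symmetricGenerators R r τ (Sum.inl i) : MvPowerSeries (Fin r ⊕ τ) R) =
      symmetricGenerators R r τ (Sum.inl i) := by
  rw [rename_coe, symmetricGenerators, Sum.elim_inl, MvPolynomial.rename_rename,
    show ⇑(Equiv.sumCongr π (Equiv.refl τ)) ∘ Sum.inl = Sum.inl ∘ π from rfl,
    ← MvPolynomial.rename_rename, MvPolynomial.rename_esymm]

variable [Finite τ]

theorem hasSubst_symmetricGenerators :
    HasSubst fun v => (symmetricGenerators R r τ v : MvPowerSeries (Fin r ⊕ τ) R) :=
  hasSubst_of_constantCoeff_zero constantCoeff_symmetricGenerators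

theorem exists_isWeightedHomogeneous_subst_eq_homogeneousComponent
    {P : MvPowerSeries (Fin r ⊕ τ) R}
    (hP : ∀ π : Equiv.Perm (Fin r), rename (Equiv.sumCongr π (Equiv.refl τ)) P = P) (n : ℕ) :
    ∃ W : MvPolynomial (Fin r ⊕ τ) R, W.IsWeightedHomogeneous (symmetricWeight r τ) n ∧
      subst (fun v => (symmetricGenerators R r τ v : MvPowerSeries (Fin r ⊕ τ) R))
        (W : MvPowerSeries (Fin r ⊕ τ) R) = homogeneousComponent n P := by
  have hp (π : Equiv.Perm (Fin r)) : MvPolynomial.rename (Equiv.sumCongr π (Equiv.refl τ))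
      (MvPolynomial.homogeneousComponent n (truncTotal (n + 1) P)) =
      MvPolynomial.homogeneousComponent n (truncTotal (n + 1) P) :=
    MvPolynomial.coe_inj.1 <| by
      rw [← rename_coe, coe_homogeneousComponent_truncTotal, ← homogeneousComponent_rename_equiv,
        hP]
  obtain ⟨W, hWn, hWP⟩ :=
    MvPolynomial.exists_isWeightedHomogeneous_aeval_symmetricGenerators_eq hp
      (MvPolynomial.homogeneousComponent_isHomogeneous n _)
  refine ⟨W, hWn, ?_⟩
  rw [subst_coe, ← coe_aeval_eq_aeval_coe, hWP, coe_homogeneousComponent_truncTotal]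

theorem exists_subst_symmetricGenerators_eq {P : MvPowerSeries (Fin r ⊕ τ) R}
    (hP : ∀ π : Equiv.Perm (Fin r), rename (Equiv.sumCongr π (Equiv.refl τ)) P = P) :
    ∃ H : MvPowerSeries (Fin r ⊕ τ) R,
      subst (fun v => (symmetricGenerators R r τ v : MvPowerSeries (Fin r ⊕ τ) R)) H = P := by
  set a := fun v => (symmetricGenerators R r τ v : MvPowerSeries (Fin r ⊕ τ) R)
  have ha : HasSubst a := hasSubst_symmetricGenerators
  choose W hWn hWP using exists_isWeightedHomogeneous_subst_eq_homogeneousComponent hP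
  refine ⟨ofWeightedHomogeneous (symmetricWeight r τ) W, ext fun d => ?_⟩
  set T := ∑ n ∈ range (d.degree + 1), (W n : MvPowerSeries (Fin r ⊕ τ) R)
  -- the parts of weight `> deg d` of `H` do not contribute to the coefficient of `d`
  have hrest := (lt_weightedOrder_ofWeightedHomogeneous_sub hWn d.degree).trans_le
    (weightedOrder_le_order_subst ha symmetricWeight_le_order_symmetricGenerators _)
  calc coeff d (subst a (ofWeightedHomogeneous (symmetricWeight r τ) W))
      = coeff d (subst a T) := by
        rw [← sub_eq_zero, ← map_sub, ← subst_sub ha]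
        exact coeff_of_lt_order hrest
    _ = coeff d P := by
        rw [← substAlgHom_apply ha, map_sum, map_sum]
        simp [a, hWP, coeff_homogeneousComponent]

end MvPowerSeries

namespace MvPowerSeries

open MvPolynomial (symmetricGenerators esymm)

variable {R : Type*} [CommRing R] {ι : Type*}

theorem subst_subst_pair {σ τ : Type*} {b : σ → MvPowerSeries τ R} (hb : HasSubst b)
    {u v : MvPowerSeries σ R} (huv : HasSubst ![u, v]) (E : MvPowerSeries (Fin 2) R) :
    subst b (subst ![u, v] E) = subst ![subst b u, subst b v] E := by
  rw [subst_comp_subst_apply huv hb]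
  congr 1
  funext k
  fin_cases k <;> rfl

noncomputable def twistFamily (E : MvPowerSeries (Fin 2) R) :
    ι ⊕ Unit → MvPowerSeries (ι ⊕ Unit) R :=
  Sum.elim (fun i => subst ![X (Sum.inl i), X (Sum.inr ())] E) fun _ => X (Sum.inr ())

variable {E : MvPowerSeries (Fin 2) R}

theorem constantCoeff_twistFamily (hE : constantCoeff E = 0) (v : ι ⊕ Unit) :
    constantCoeff (twistFamily E v) = 0 := by
  rcases v with i | u
  · exact constantCoeff_subst_eq_zero HasSubst.X_X (fun k => by fin_cases k <;> simp) hE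
  · exact constantCoeff_X _

variable [Finite ι]

theorem hasSubst_twistFamily (hE : constantCoeff E = 0) : HasSubst (twistFamily (ι := ι) E) :=
  hasSubst_of_constantCoeff_zero (constantCoeff_twistFamily hE)

theorem subst_twistFamily_subst_twistFamily {Em : MvPowerSeries (Fin 2) R}
    (hE : constantCoeff E = 0) (hEm : constantCoeff Em = 0) (hinv : subst ![Em, X 1] E = X 0)
    (f : MvPowerSeries (ι ⊕ Unit) R) :
    subst (twistFamily Em) (subst (twistFamily E) f) = f := by
  have hEm' := hasSubst_twistFamily (ι := ι) hEm
  rw [subst_comp_subst_apply (hasSubst_twistFamily hE) hEm']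
  suffices h : (fun v => subst (twistFamily Em) (twistFamily E v)) = X by
    rw [h, subst_self, id]
  funext v
  rcases v with i | u
  · have hpair : HasSubst ![Em, X 1] :=
      hasSubst_of_constantCoeff_zero fun k => by fin_cases k <;> simp [hEm]
    calc subst (twistFamily Em) (subst ![X (Sum.inl i), X (Sum.inr ())] E)
        = subst ![subst ![X (Sum.inl i), X (Sum.inr ())] Em,
            subst ![X (Sum.inl i), X (Sum.inr ())] (X 1 : MvPowerSeries (Fin 2) R)] E := by
          rw [subst_subst_pair hEm' HasSubst.X_X, subst_X hEm', subst_X hEm', subst_X HasSubst.X_X]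
          rfl
      _ = X (Sum.inl i) := by
          rw [← subst_subst_pair HasSubst.X_X hpair, hinv, subst_X HasSubst.X_X]
          rfl
  · exact subst_X hEm' _

theorem rename_subst_twistFamily (hE : constantCoeff E = 0) (π : Equiv.Perm ι)
    (f : MvPowerSeries (ι ⊕ Unit) R) :
    rename (Equiv.sumCongr π (Equiv.refl Unit)) (subst (twistFamily E) f) =
      subst (twistFamily E) (rename (Equiv.sumCongr π (Equiv.refl Unit)) f) := by
  have hE' := hasSubst_twistFamily (ι := ι) hE
  rw [rename_eq_subst, rename_eq_subst, subst_comp_subst_apply hE' (HasSubst.X_comp _),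
    subst_comp_subst_apply (HasSubst.X_comp _) hE']
  congr 1
  funext v
  rcases v with i | u
  · rw [Function.comp_apply, subst_X hE', twistFamily, Sum.elim_inl,
      subst_subst_pair (HasSubst.X_comp _) HasSubst.X_X, subst_X (HasSubst.X_comp _),
      subst_X (HasSubst.X_comp _)]
    rfl
  · rw [Function.comp_apply, subst_X hE']
    exact subst_X (HasSubst.X_comp _) _

variable {r : ℕ}

theorem exists_subst_symmetricGenerators_eq_subst_twistFamily {Em : MvPowerSeries (Fin 2) R}
    (hE : constantCoeff E = 0) (hEm : constantCoeff Em = 0) (hinv : subst ![Em, X 1] E = X 0) :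
    ∃ H : Fin r → MvPowerSeries (Fin r ⊕ Unit) R,
      (∀ i, subst (fun v => (symmetricGenerators R r Unit v : MvPowerSeries _ R)) (H i) =
        subst (twistFamily E)
          (symmetricGenerators R r Unit (Sum.inl i) : MvPowerSeries (Fin r ⊕ Unit) R)) ∧
      ∀ i, subst (fun v => subst (twistFamily Em)
          (symmetricGenerators R r Unit v : MvPowerSeries (Fin r ⊕ Unit) R)) (H i) =
        (symmetricGenerators R r Unit (Sum.inl i) : MvPowerSeries (Fin r ⊕ Unit) R) := by
  choose H hH using fun i : Fin r => exists_subst_symmetricGenerators_eq fun π => by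
    rw [rename_subst_twistFamily hE, rename_coe_symmetricGenerators_inl (R := R) π i]
  refine ⟨H, hH, fun i => ?_⟩
  rw [← subst_comp_subst_apply hasSubst_symmetricGenerators (hasSubst_twistFamily hEm), hH,
    subst_twistFamily_subst_twistFamily hE hEm hinv]

end MvPowerSeries

section Twisting

open MvPolynomial (symmetricGenerators esymm)

variable {R : Type*} [CommRing R] {r : ℕ} {E : MvPowerSeries (Fin 2) R}

theorem msubst_pair_eq_subst (hE : constantCoeff E = 0) (f : MvPowerSeries (Fin 2) R) :
    msubst ![E, X 1] f = subst ![E, X 1] f :=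
  msubst_eq_subst (fun k => by fin_cases k <;> simp [hE]) f

theorem aeval_msubst_esymm (hE : constantCoeff E = 0) (i : Fin r) :
    MvPolynomial.aeval (fun j : Fin r => msubst ![X (Sum.inl j), X (Sum.inr ())] E)
        (esymm (Fin r) R (i + 1)) =
      subst (twistFamily E) (symmetricGenerators R r Unit (Sum.inl i) : MvPowerSeries _ R) := by
  rw [coe_symmetricGenerators_inl, ← substAlgHom_apply (hasSubst_twistFamily hE),
    MvPolynomial.comp_aeval_apply]
  refine congrArg (MvPolynomial.aeval · _) (funext fun j => ?_)
  rw [substAlgHom_apply, subst_X (hasSubst_twistFamily hE),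
    msubst_eq_subst fun k => by fin_cases k <;> simp]
  rfl

theorem msubst_esymm_eq_subst_symmetricGenerators (H : MvPowerSeries (Fin r ⊕ Unit) R) :
    msubst (Sum.elim (fun i : Fin r => MvPolynomial.aeval
        (fun j => (X (Sum.inl j) : MvPowerSeries (Fin r ⊕ Unit) R)) (esymm (Fin r) R (i + 1)))
        fun _ => X (Sum.inr ())) H =
      subst (fun v => (symmetricGenerators R r Unit v : MvPowerSeries _ R)) H := by
  rw [← msubst_eq_subst constantCoeff_symmetricGenerators]
  congr 1
  funext v
  rcases v with i | u
  · exact (coe_symmetricGenerators_inl i).symm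
  · exact (coe_symmetricGenerators_inr u).symm

theorem msubst_aeval_msubst_esymm_eq_subst (hE : constantCoeff E = 0)
    (H : MvPowerSeries (Fin r ⊕ Unit) R) :
    msubst (Sum.elim (fun i : Fin r => MvPolynomial.aeval
        (fun j => msubst ![X (Sum.inl j), X (Sum.inr ())] E) (esymm (Fin r) R (i + 1)))
        fun _ => X (Sum.inr ())) H =
      subst (fun v => subst (twistFamily E)
        (symmetricGenerators R r Unit v : MvPowerSeries (Fin r ⊕ Unit) R)) H := by
  rw [← msubst_eq_subst fun v => constantCoeff_subst_eq_zero (hasSubst_twistFamily hE)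
    (constantCoeff_twistFamily hE) (constantCoeff_symmetricGenerators (R := R) v)]
  congr 1
  funext v
  rcases v with i | u
  · exact aeval_msubst_esymm hE i
  · rw [Sum.elim_inr, coe_symmetricGenerators_inr, subst_X (hasSubst_twistFamily hE)]
    rfl

end Twisting

theorem exists_symmetric_twisting_series_general
    {R : Type*} [CommRing R]
    (F Fm : MvPowerSeries (Fin 2) R)
    (hF0 : constantCoeff F = 0) (hFm0 : constantCoeff Fm = 0)
    (hinv₁ : msubst ![Fm, X 1] F = X 0)
    (hinv₂ : msubst ![F, X 1] Fm = X 0)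
    (r : ℕ) :
    -- the variable `x`
    let x : MvPowerSeries (Fin r ⊕ Unit) R := X (Sum.inr ())
    -- the elementary symmetric polynomials `sᵢ` in `μ₁, …, μ_r`
    let s : Fin r → MvPowerSeries (Fin r ⊕ Unit) R := fun i =>
      MvPolynomial.aeval (fun j : Fin r => (X (Sum.inl j) : MvPowerSeries (Fin r ⊕ Unit) R))
        (MvPolynomial.esymm (Fin r) R ((i : ℕ) + 1))
    -- `Gⁱ = sᵢ(F(μ₁,x),…,F(μ_r,x))`
    let G : Fin r → MvPowerSeries (Fin r ⊕ Unit) R := fun i =>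
      MvPolynomial.aeval (fun j : Fin r => msubst ![X (Sum.inl j), x] F)
        (MvPolynomial.esymm (Fin r) R ((i : ℕ) + 1))
    -- `G₋ⁱ = sᵢ(F₋(μ₁,x),…,F₋(μ_r,x))`
    let Gm : Fin r → MvPowerSeries (Fin r ⊕ Unit) R := fun i =>
      MvPolynomial.aeval (fun j : Fin r => msubst ![X (Sum.inl j), x] Fm)
        (MvPolynomial.esymm (Fin r) R ((i : ℕ) + 1))
    ∃ H Hm : Fin r → MvPowerSeries (Fin r ⊕ Unit) R,
      (∀ i, msubst (Sum.elim s fun _ => x) (H i) = G i) ∧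
      (∀ i, msubst (Sum.elim s fun _ => x) (Hm i) = Gm i) ∧
      (∀ i, msubst (Sum.elim Gm fun _ => x) (H i) = s i) ∧
      (∀ i, msubst (Sum.elim G fun _ => x) (Hm i) = s i) := by
  intro x s G Gm
  obtain ⟨H, hH, hHinv⟩ := exists_subst_symmetricGenerators_eq_subst_twistFamily (r := r) hF0 hFm0
    ((msubst_pair_eq_subst hFm0 F).symm.trans hinv₁)
  obtain ⟨Hm, hHm, hHminv⟩ := exists_subst_symmetricGenerators_eq_subst_twistFamily (r := r) hFm0
    hF0 ((msubst_pair_eq_subst hF0 Fm).symm.trans hinv₂)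
  refine ⟨H, Hm, fun i => ?_, fun i => ?_, fun i => ?_, fun i => ?_⟩
  · exact (msubst_esymm_eq_subst_symmetricGenerators _).trans
      ((hH i).trans (aeval_msubst_esymm hF0 i).symm)
  · exact (msubst_esymm_eq_subst_symmetricGenerators _).trans
      ((hHm i).trans (aeval_msubst_esymm hFm0 i).symm)
  · exact (msubst_aeval_msubst_esymm_eq_subst hFm0 _).trans
      ((hHinv i).trans (coe_symmetricGenerators_inl i))
  · exact (msubst_aeval_msubst_esymm_eq_subst hF0 _).trans
      ((hHminv i).trans (coe_symmetricGenerators_inl i))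

/-- **Twisting series and their inverses.** Let `F, F₋ ∈ R[[u,v]]` have zero constant term
and satisfy `F(F₋(u,v),v) = u` and `F₋(F(u,v),v) = u`. Fix `r ≥ 1` and work in
`R[[μ₁,…,μ_r,x]]`, with `sᵢ` the elementary symmetric polynomials in the `μ`'s; set
`Gⁱ := sᵢ(F(μ₁,x),…,F(μ_r,x))` and `G₋ⁱ := sᵢ(F₋(μ₁,x),…,F₋(μ_r,x))`. Then there exist
power series `Hⁱ, H₋ⁱ ∈ R[[t₁,…,t_r,x]]` with `Gⁱ = Hⁱ(s₁,…,s_r,x)` and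
`G₋ⁱ = H₋ⁱ(s₁,…,s_r,x)`, and these satisfy the inverse identities
`Hⁱ(G₋¹,…,G₋ʳ,x) = sᵢ` and `H₋ⁱ(G¹,…,Gʳ,x) = sᵢ`. -/
theorem exists_symmetric_twisting_series
    {R : Type*} [CommRing R]
    (F Fm : MvPowerSeries (Fin 2) R)
    (hF0 : constantCoeff F = 0) (hFm0 : constantCoeff Fm = 0)
    (hinv₁ : msubst ![Fm, X 1] F = X 0)
    (hinv₂ : msubst ![F, X 1] Fm = X 0)
    (r : ℕ) (hr : 1 ≤ r) :
    -- the variable `x`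
    let x : MvPowerSeries (Fin r ⊕ Unit) R := X (Sum.inr ())
    -- the elementary symmetric polynomials `sᵢ` in `μ₁, …, μ_r`
    let s : Fin r → MvPowerSeries (Fin r ⊕ Unit) R := fun i =>
      MvPolynomial.aeval (fun j : Fin r => (X (Sum.inl j) : MvPowerSeries (Fin r ⊕ Unit) R))
        (MvPolynomial.esymm (Fin r) R ((i : ℕ) + 1))
    -- `Gⁱ = sᵢ(F(μ₁,x),…,F(μ_r,x))`
    let G : Fin r → MvPowerSeries (Fin r ⊕ Unit) R := fun i =>
      MvPolynomial.aeval (fun j : Fin r => msubst ![X (Sum.inl j), x] F)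
        (MvPolynomial.esymm (Fin r) R ((i : ℕ) + 1))
    -- `G₋ⁱ = sᵢ(F₋(μ₁,x),…,F₋(μ_r,x))`
    let Gm : Fin r → MvPowerSeries (Fin r ⊕ Unit) R := fun i =>
      MvPolynomial.aeval (fun j : Fin r => msubst ![X (Sum.inl j), x] Fm)
        (MvPolynomial.esymm (Fin r) R ((i : ℕ) + 1))
    ∃ H Hm : Fin r → MvPowerSeries (Fin r ⊕ Unit) R,
      (∀ i, msubst (Sum.elim s fun _ => x) (H i) = G i) ∧
      (∀ i, msubst (Sum.elim s fun _ => x) (Hm i) = Gm i) ∧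
      (∀ i, msubst (Sum.elim Gm fun _ => x) (H i) = s i) ∧
      (∀ i, msubst (Sum.elim G fun _ => x) (Hm i) = s i) :=
  exists_symmetric_twisting_series_general F Fm hF0 hFm0 hinv₁ hinv₂ r
end
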